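/- arXiv:2208.07537 — 6 statements merged into one kernel-verified Lean document; each statement's English description precedes it below -/
import Mathlib

section
/- Discrete Gagliardo–Nirenberg endpoint inequality: for any h > 0 and any square-summable f : hℤ → ℂ, one has ‖f‖_{L^∞_h} ≤ ‖f‖_{L²_h}^{1/2} ‖D⁺_h f‖_{L²_h}^{1/2}, where ‖f‖_{L^∞_h} = sup_{x∈hℤ} |f(x)|. -/
open MeasureTheory Real

open Filter Finset Topology

noncomputable def L2h (h : ℝ) (f : ℤ → ℂ) : ℝ := Real.sqrt (h * ∑' m : ℤ, ‖f m‖ ^ 2)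

noncomputable def Dh (h : ℝ) (f : ℤ → ℂ) : ℤ → ℂ := fun m => (f (m + 1) - f m) / h

lemma summable_mul_sq (u v : ℤ → ℝ) (hu : Summable fun m => u m ^ 2)
    (hv : Summable fun m => v m ^ 2) : Summable fun m => u m * v m := by
  refine Summable.of_abs (Summable.of_nonneg_of_le (fun m => abs_nonneg _)
    (fun m => ?_) ((hu.add hv).div_const 2))
  rw [abs_mul]
  nlinarith [two_mul_le_add_sq |u m| |v m|, sq_abs (u m), sq_abs (v m)]

lemma tsum_CS (u v : ℤ → ℝ) (hu0 : ∀ m, 0 ≤ u m) (hv0 : ∀ m, 0 ≤ v m)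
    (hu : Summable fun m => u m ^ 2) (hv : Summable fun m => v m ^ 2) :
    ∑' m, u m * v m ≤ Real.sqrt (∑' m, u m ^ 2) * Real.sqrt (∑' m, v m ^ 2) := by
  refine Summable.tsum_le_of_sum_le (summable_mul_sq u v hu hv) fun s => ?_
  have h1 : (∑ i ∈ s, u i * v i) ^ 2 ≤ (∑ i ∈ s, u i ^ 2) * ∑ i ∈ s, v i ^ 2 :=
    Finset.sum_mul_sq_le_sq_mul_sq s u v
  have h2 : ∑ i ∈ s, u i ^ 2 ≤ ∑' m, u m ^ 2 :=
    Summable.sum_le_tsum s (fun m _ => sq_nonneg _) hu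
  have h3 : ∑ i ∈ s, v i ^ 2 ≤ ∑' m, v m ^ 2 :=
    Summable.sum_le_tsum s (fun m _ => sq_nonneg _) hv
  calc ∑ i ∈ s, u i * v i = Real.sqrt ((∑ i ∈ s, u i * v i) ^ 2) :=
        (Real.sqrt_sq (Finset.sum_nonneg fun i _ => mul_nonneg (hu0 i) (hv0 i))).symm
    _ ≤ Real.sqrt ((∑' m, u m ^ 2) * ∑' m, v m ^ 2) := by
        apply Real.sqrt_le_sqrt
        calc (∑ i ∈ s, u i * v i) ^ 2 ≤ (∑ i ∈ s, u i ^ 2) * ∑ i ∈ s, v i ^ 2 := h1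
          _ ≤ (∑' m, u m ^ 2) * ∑' m, v m ^ 2 :=
            mul_le_mul h2 h3 (Finset.sum_nonneg fun i _ => sq_nonneg _)
              (tsum_nonneg fun m => sq_nonneg _)
    _ = _ := Real.sqrt_mul (tsum_nonneg fun m => sq_nonneg _) _

lemma telescope_bound (g : ℤ → ℝ) (hg : Summable g) (n : ℤ) :
    2 * g n ≤ ∑' m : ℤ, |g (m + 1) - g m| := by
  set d : ℤ → ℝ := fun m => |g (m + 1) - g m| with hd_def
  have hg1 : Summable fun m : ℤ => g (m + 1) :=
    hg.comp_injective (fun a b hab => by omega)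
  have hd : Summable d := by
    refine Summable.of_nonneg_of_le (fun m => abs_nonneg _) (fun m => ?_)
      (hg1.abs.add hg.abs)
    exact (abs_sub _ _).trans le_rfl
  have h0top : Tendsto g atTop (𝓝 0) :=
    hg.tendsto_cofinite_zero.mono_left (by rw [Int.cofinite_eq]; exact le_sup_right)
  have h0bot : Tendsto g atBot (𝓝 0) :=
    hg.tendsto_cofinite_zero.mono_left (by rw [Int.cofinite_eq]; exact le_sup_left)
  have hdA : Summable fun k : ℕ => d (n + k) :=
    hd.comp_injective (fun a b hab => by omega)
  have hdB : Summable fun k : ℕ => d (n + -((k : ℤ) + 1)) :=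
    hd.comp_injective (fun a b hab => by omega)
  have hsA : HasSum (fun k : ℕ => g (n + k) - g (n + k + 1)) (g n) := by
    have hnorm : Summable fun k : ℕ => ‖g (n + k) - g (n + k + 1)‖ := by
      refine hdA.congr fun k => ?_
      simp [hd_def, Real.norm_eq_abs, abs_sub_comm]
    rw [hasSum_iff_tendsto_nat_of_summable_norm hnorm]
    have hps : ∀ K : ℕ, ∑ i ∈ range K, (g (n + i) - g (n + i + 1)) = g n - g (n + K) := by
      intro K
      have := Finset.sum_range_sub' (f := fun i : ℕ => g (n + i)) K
      simpa [add_assoc] using this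
    have hlim : Tendsto (fun K : ℕ => g (n + K)) atTop (𝓝 0) :=
      h0top.comp (tendsto_atTop_add_const_left _ n tendsto_natCast_atTop_atTop)
    have h2 := (tendsto_const_nhds (x := g n)).sub hlim
    simp only [sub_zero] at h2
    exact h2.congr fun K => (hps K).symm
  have hsB : HasSum (fun k : ℕ => g (n - k) - g (n - k - 1)) (g n) := by
    have hnorm : Summable fun k : ℕ => ‖g (n - k) - g (n - k - 1)‖ := by
      refine hdB.congr fun k => ?_
      have e1 : n + -((k : ℤ) + 1) + 1 = n - k := by ring
      have e2 : n + -((k : ℤ) + 1) = n - k - 1 := by ring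
      show |g (n + -((k : ℤ) + 1) + 1) - g (n + -((k : ℤ) + 1))| = ‖g (n - (k:ℤ)) - g (n - (k:ℤ) - 1)‖
      rw [e1, e2, Real.norm_eq_abs]
    rw [hasSum_iff_tendsto_nat_of_summable_norm hnorm]
    have hps : ∀ K : ℕ, ∑ i ∈ range K, (g (n - i) - g (n - i - 1)) = g n - g (n - K) := by
      intro K
      have := Finset.sum_range_sub' (f := fun i : ℕ => g (n - i)) K
      simpa [sub_sub] using this
    have hlim : Tendsto (fun K : ℕ => g (n - K)) atTop (𝓝 0) := by
      refine h0bot.comp ?_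
      have : Tendsto (fun K : ℕ => -(K : ℤ)) atTop atBot :=
        tendsto_neg_atBot_iff.mpr tendsto_natCast_atTop_atTop
      simpa [sub_eq_add_neg] using tendsto_atBot_add_const_left _ n this
    have h2 := (tendsto_const_nhds (x := g n)).sub hlim
    simp only [sub_zero] at h2
    exact h2.congr fun K => (hps K).symm
  have ha_le : (∑' k : ℕ, (g (n + k) - g (n + k + 1))) ≤ ∑' k : ℕ, d (n + k) := by
    refine Summable.tsum_le_tsum (fun k => ?_) hsA.summable hdA
    calc g (n + k) - g (n + k + 1) ≤ |g (n + k) - g (n + k + 1)| := le_abs_self _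
      _ = d (n + k) := by rw [hd_def]; exact abs_sub_comm _ _
  have hb_le : (∑' k : ℕ, (g (n - k) - g (n - k - 1))) ≤ ∑' k : ℕ, d (n + -((k : ℤ) + 1)) := by
    refine Summable.tsum_le_tsum (fun k => ?_) hsB.summable hdB
    have e1 : n + -((k : ℤ) + 1) + 1 = n - k := by ring
    have e2 : n + -((k : ℤ) + 1) = n - k - 1 := by ring
    calc g (n - k) - g (n - k - 1) ≤ |g (n - k) - g (n - k - 1)| := le_abs_self _
      _ = d (n + -((k : ℤ) + 1)) := by
          show _ = |g (n + -((k : ℤ) + 1) + 1) - g (n + -((k : ℤ) + 1))|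
          rw [e1, e2]
  have hsplit : ∑' m : ℤ, d m = (∑' k : ℕ, d (n + k)) + ∑' k : ℕ, d (n + -((k : ℤ) + 1)) := by
    rw [← (Equiv.addLeft n).tsum_eq d]
    exact tsum_of_nat_of_neg_add_one hdA hdB
  calc 2 * g n = (∑' k : ℕ, (g (n + k) - g (n + k + 1)))
        + ∑' k : ℕ, (g (n - k) - g (n - k - 1)) := by rw [hsA.tsum_eq, hsB.tsum_eq]; ring
    _ ≤ (∑' k : ℕ, d (n + k)) + ∑' k : ℕ, d (n + -((k : ℤ) + 1)) := add_le_add ha_le hb_le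
    _ = ∑' m : ℤ, d m := hsplit.symm

theorem discrete_GN_endpoint (h : ℝ) (hh : 0 < h) (f : ℤ → ℂ)
    (hf : Summable fun m : ℤ => ‖f m‖ ^ 2) :
    (⨆ m : ℤ, ‖f m‖) ≤ Real.sqrt (L2h h f) * Real.sqrt (L2h h (Dh h f)) := by
  set A := ∑' m : ℤ, ‖f m‖ ^ 2 with hA_def
  set B := ∑' m : ℤ, ‖Dh h f m‖ ^ 2 with hB_def
  have hf1 : Summable fun m : ℤ => ‖f (m + 1)‖ ^ 2 :=
    hf.comp_injective (fun a b hab => by omega)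
  have hnormDh : ∀ m : ℤ, ‖Dh h f m‖ = ‖f (m + 1) - f m‖ / h := by
    intro m
    rw [Dh, norm_div, Complex.norm_real, Real.norm_eq_abs, abs_of_pos hh]
  have hDf : Summable fun m : ℤ => ‖Dh h f m‖ ^ 2 := by
    refine Summable.of_nonneg_of_le (fun m => sq_nonneg _) (fun m => ?_)
      (((hf1.add hf).mul_left (2 / h ^ 2)))
    have htri : ‖f (m + 1) - f m‖ ≤ ‖f (m + 1)‖ + ‖f m‖ := norm_sub_le _ _
    rw [hnormDh m, div_pow]
    rw [div_le_iff₀ (by positivity)]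
    have he : 2 / h ^ 2 * (‖f (m + 1)‖ ^ 2 + ‖f m‖ ^ 2) * h ^ 2
        = 2 * (‖f (m + 1)‖ ^ 2 + ‖f m‖ ^ 2) := by field_simp
    rw [he]
    nlinarith [norm_nonneg (f (m + 1) - f m), norm_nonneg (f (m + 1)), norm_nonneg (f m),
      sq_nonneg (‖f (m + 1)‖ - ‖f m‖)]
  have hA0 : 0 ≤ A := tsum_nonneg fun m => sq_nonneg _
  have hB0 : 0 ≤ B := tsum_nonneg fun m => sq_nonneg _
  -- pointwise bound on the differences of squares
  have hkey : ∀ m : ℤ, |‖f (m + 1)‖ ^ 2 - ‖f m‖ ^ 2|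
      ≤ h * (‖Dh h f m‖ * ‖f (m + 1)‖ + ‖Dh h f m‖ * ‖f m‖) := by
    intro m
    have h1 : |‖f (m + 1)‖ - ‖f m‖| ≤ ‖f (m + 1) - f m‖ := abs_norm_sub_norm_le _ _
    have h2 : ‖f (m + 1) - f m‖ = h * ‖Dh h f m‖ := by
      rw [hnormDh m]; field_simp
    have h3 : |‖f (m + 1)‖ ^ 2 - ‖f m‖ ^ 2|
        = |‖f (m + 1)‖ - ‖f m‖| * (‖f (m + 1)‖ + ‖f m‖) := by
      rw [← abs_of_nonneg (add_nonneg (norm_nonneg (f (m+1))) (norm_nonneg (f m))), ← abs_mul]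
      congr 1; ring
    rw [h3]
    calc |‖f (m + 1)‖ - ‖f m‖| * (‖f (m + 1)‖ + ‖f m‖)
        ≤ (h * ‖Dh h f m‖) * (‖f (m + 1)‖ + ‖f m‖) := by
          refine mul_le_mul_of_nonneg_right (h1.trans_eq h2) ?_
          positivity
      _ = h * (‖Dh h f m‖ * ‖f (m + 1)‖ + ‖Dh h f m‖ * ‖f m‖) := by ring
  -- Cauchy-Schwarz bounds
  have hshiftA : (∑' m : ℤ, ‖f (m + 1)‖ ^ 2) = A :=
    (Equiv.addRight (1 : ℤ)).tsum_eq (fun m => ‖f m‖ ^ 2)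
  have c1 : (∑' m : ℤ, ‖Dh h f m‖ * ‖f (m + 1)‖) ≤ Real.sqrt B * Real.sqrt A := by
    have := tsum_CS (fun m => ‖Dh h f m‖) (fun m => ‖f (m + 1)‖)
      (fun m => norm_nonneg _) (fun m => norm_nonneg _) hDf hf1
    rwa [hshiftA] at this
  have c2 : (∑' m : ℤ, ‖Dh h f m‖ * ‖f m‖) ≤ Real.sqrt B * Real.sqrt A :=
    tsum_CS (fun m => ‖Dh h f m‖) (fun m => ‖f m‖)
      (fun m => norm_nonneg _) (fun m => norm_nonneg _) hDf hf
  have hs1 : Summable fun m : ℤ => ‖Dh h f m‖ * ‖f (m + 1)‖ :=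
    summable_mul_sq _ _ hDf hf1
  have hs2 : Summable fun m : ℤ => ‖Dh h f m‖ * ‖f m‖ :=
    summable_mul_sq _ _ hDf hf
  have hdsum : Summable fun m : ℤ => |‖f (m + 1)‖ ^ 2 - ‖f m‖ ^ 2| := by
    refine Summable.of_nonneg_of_le (fun m => abs_nonneg _) (fun m => ?_)
      (hf1.add hf)
    refine (abs_sub _ _).trans ?_
    rw [abs_of_nonneg (sq_nonneg (‖f (m+1)‖)), abs_of_nonneg (sq_nonneg (‖f m‖))]
  have hsum_d : (∑' m : ℤ, |‖f (m + 1)‖ ^ 2 - ‖f m‖ ^ 2|)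
      ≤ 2 * (h * (Real.sqrt A * Real.sqrt B)) := by
    calc (∑' m : ℤ, |‖f (m + 1)‖ ^ 2 - ‖f m‖ ^ 2|)
        ≤ ∑' m : ℤ, h * (‖Dh h f m‖ * ‖f (m + 1)‖ + ‖Dh h f m‖ * ‖f m‖) :=
          Summable.tsum_le_tsum hkey hdsum (((hs1.add hs2)).mul_left h)
      _ = h * ((∑' m : ℤ, ‖Dh h f m‖ * ‖f (m + 1)‖) + ∑' m : ℤ, ‖Dh h f m‖ * ‖f m‖) := by
          rw [tsum_mul_left, Summable.tsum_add hs1 hs2]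
      _ ≤ h * (Real.sqrt B * Real.sqrt A + Real.sqrt B * Real.sqrt A) := by
          refine mul_le_mul_of_nonneg_left (add_le_add c1 c2) hh.le
      _ = 2 * (h * (Real.sqrt A * Real.sqrt B)) := by ring
  have hmain : ∀ n : ℤ, ‖f n‖ ^ 2 ≤ h * (Real.sqrt A * Real.sqrt B) := by
    intro n
    have ht := telescope_bound (fun m => ‖f m‖ ^ 2) hf n
    linarith
  have hRHS : Real.sqrt (L2h h f) * Real.sqrt (L2h h (Dh h f))
      = Real.sqrt (h * (Real.sqrt A * Real.sqrt B)) := by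
    rw [L2h, L2h, ← hA_def, ← hB_def, ← Real.sqrt_mul (Real.sqrt_nonneg _)]
    congr 1
    rw [Real.sqrt_mul hh.le A, Real.sqrt_mul hh.le B,
      show Real.sqrt h * Real.sqrt A * (Real.sqrt h * Real.sqrt B)
        = (Real.sqrt h * Real.sqrt h) * (Real.sqrt A * Real.sqrt B) by ring,
      Real.mul_self_sqrt hh.le]
  rw [hRHS]
  refine ciSup_le fun n => ?_
  rw [Real.le_sqrt (norm_nonneg _) (by positivity)]
  exact hmain n
end

section
/- Discrete Gagliardo–Nirenberg inequality: for 2 < q < ∞ and θ = 1/2 − 1/q, there is a constant C independent of h ∈ (0,1] such that ‖f‖_{L^q_h} ≤ C ‖f‖_{L²_h}^{1−θ} ‖D⁺_h f‖_{L²_h}^{θ} for all square-summable f : hℤ → ℂ. -/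
open MeasureTheory Real

open Filter Topology Finset

/-- Cauchy-Schwarz for tsums of nonnegative sequences. -/
private lemma cs_tsum {a b : ℤ → ℝ} (ha0 : ∀ i, 0 ≤ a i) (hb0 : ∀ i, 0 ≤ b i)
    (ha : Summable fun i => a i ^ 2) (hb : Summable fun i => b i ^ 2) :
    Summable (fun i => a i * b i) ∧
      ∑' i, a i * b i ≤ Real.sqrt (∑' i, a i ^ 2) * Real.sqrt (∑' i, b i ^ 2) := by
  have hsum : Summable (fun i => a i * b i) := by
    apply Summable.of_nonneg_of_le (fun i => mul_nonneg (ha0 i) (hb0 i))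
      (fun i => ?_) ((ha.add hb).div_const 2)
    nlinarith [sq_nonneg (a i - b i)]
  refine ⟨hsum, Summable.tsum_le_of_sum_le hsum fun s => ?_⟩
  calc ∑ i ∈ s, a i * b i
      ≤ Real.sqrt (∑ i ∈ s, a i ^ 2) * Real.sqrt (∑ i ∈ s, b i ^ 2) :=
        Real.sum_mul_le_sqrt_mul_sqrt s a b
    _ ≤ _ := by
        gcongr
        · exact Summable.sum_le_tsum s (fun i _ => sq_nonneg _) ha
        · exact Summable.sum_le_tsum s (fun i _ => sq_nonneg _) hb

private lemma shift_summable {f : ℤ → ℂ} (hf : Summable fun m => ‖f m‖ ^ 2) :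
    Summable fun m : ℤ => ‖f (m + 1)‖ ^ 2 :=
  hf.comp_injective (add_left_injective 1)

private lemma diff_sq_summable {f : ℤ → ℂ} (hf : Summable fun m => ‖f m‖ ^ 2) :
    Summable fun k : ℤ => ‖f (k + 1) - f k‖ ^ 2 := by
  apply Summable.of_nonneg_of_le (fun k => sq_nonneg _) (fun k => ?_)
    (((shift_summable hf).add hf).mul_left 2)
  have h1 : ‖f (k + 1) - f k‖ ≤ ‖f (k + 1)‖ + ‖f k‖ := norm_sub_le _ _
  have h2 : (0:ℝ) ≤ ‖f (k + 1) - f k‖ := norm_nonneg _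
  nlinarith [sq_nonneg (‖f (k + 1)‖ - ‖f k‖), norm_nonneg (f (k+1)), norm_nonneg (f k)]

/-- The discrete endpoint (Agmon) bound: `‖f m‖² ≤ 2 √(∑‖Δf‖²) √(∑‖f‖²)`. -/
private lemma sup_bound {f : ℤ → ℂ} (hf : Summable fun m => ‖f m‖ ^ 2) (m : ℤ) :
    ‖f m‖ ^ 2 ≤ 2 * Real.sqrt (∑' k : ℤ, ‖f (k + 1) - f k‖ ^ 2) *
      Real.sqrt (∑' k : ℤ, ‖f k‖ ^ 2) := by
  set d : ℤ → ℝ := fun k => ‖f (k + 1) - f k‖ with hd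
  set g : ℤ → ℝ := fun k => ‖f k‖ with hg
  have hd2 : Summable fun k => d k ^ 2 := diff_sq_summable hf
  set v : ℤ → ℝ := fun k => |g (k + 1) ^ 2 - g k ^ 2| with hv
  -- pointwise bound for v
  have hvle : ∀ k, v k ≤ d k * (g (k + 1) + g k) := by
    intro k
    have h1 : |g (k + 1) - g k| ≤ d k := abs_norm_sub_norm_le _ _
    have h2 : v k = |g (k + 1) - g k| * (g (k + 1) + g k) := by
      show |g (k + 1) ^ 2 - g k ^ 2| = _
      have h3 : g (k+1) ^ 2 - g k ^ 2 = (g (k+1) - g k) * (g (k+1) + g k) := by ring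
      rw [h3, abs_mul, abs_of_nonneg (add_nonneg (norm_nonneg _) (norm_nonneg _))]
    rw [h2]
    exact mul_le_mul_of_nonneg_right h1 (by positivity)
  -- sum of (g(k+1)+g k)^2
  have hb2 : Summable fun k => (g (k + 1) + g k) ^ 2 := by
    apply Summable.of_nonneg_of_le (fun k => sq_nonneg _) (fun k => ?_)
      (((shift_summable hf).add hf).mul_left 2)
    nlinarith [sq_nonneg (g (k+1) - g k)]
  obtain ⟨hcs_sum, hcs⟩ := cs_tsum (fun k => norm_nonneg _)
    (fun k => by positivity) hd2 hb2
  have hvsum : Summable v :=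
    Summable.of_nonneg_of_le (fun k => abs_nonneg _) hvle hcs_sum
  have htsum_shift : ∑' k : ℤ, g (k + 1) ^ 2 = ∑' k : ℤ, g k ^ 2 := by
    have h := Equiv.tsum_eq (Equiv.addRight (1 : ℤ)) (fun k => g k ^ 2)
    simpa using h
  have hb2le : ∑' k : ℤ, (g (k + 1) + g k) ^ 2 ≤ 4 * ∑' k : ℤ, g k ^ 2 := by
    have : ∑' k : ℤ, (g (k + 1) + g k) ^ 2 ≤ ∑' k : ℤ, (2 * (g (k+1) ^2 + g k ^2)) := by
      apply Summable.tsum_le_tsum (fun k => by nlinarith [sq_nonneg (g (k+1) - g k)]) hb2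
        (((shift_summable hf).add hf).mul_left 2)
    calc ∑' k : ℤ, (g (k + 1) + g k) ^ 2 ≤ _ := this
      _ = 2 * ((∑' k : ℤ, g (k+1)^2) + ∑' k : ℤ, g k ^2) := by
          rw [tsum_mul_left, Summable.tsum_add (shift_summable hf) hf]
      _ = 4 * ∑' k : ℤ, g k ^ 2 := by rw [htsum_shift]; ring
  have hvtsum : ∑' k, v k ≤ 2 * Real.sqrt (∑' k, d k ^ 2) * Real.sqrt (∑' k, g k ^ 2) := by
    have h1 : ∑' k, v k ≤ ∑' k, d k * (g (k + 1) + g k) := Summable.tsum_le_tsum hvle hvsum hcs_sum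
    have h2 : Real.sqrt (∑' k, (g (k + 1) + g k) ^ 2) ≤ 2 * Real.sqrt (∑' k, g k ^ 2) := by
      have : (2 : ℝ) * Real.sqrt (∑' k, g k ^ 2) = Real.sqrt (4 * ∑' k, g k ^ 2) := by
        rw [show (4:ℝ) = 2^2 by norm_num, Real.sqrt_mul (by positivity), Real.sqrt_sq (by norm_num)]
      rw [this]
      exact Real.sqrt_le_sqrt hb2le
    calc ∑' k, v k ≤ _ := h1
      _ ≤ Real.sqrt (∑' k, d k ^ 2) * Real.sqrt (∑' k, (g (k + 1) + g k) ^ 2) := hcs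
      _ ≤ Real.sqrt (∑' k, d k ^ 2) * (2 * Real.sqrt (∑' k, g k ^ 2)) := by
          exact mul_le_mul_of_nonneg_left h2 (Real.sqrt_nonneg _)
      _ = 2 * Real.sqrt (∑' k, d k ^ 2) * Real.sqrt (∑' k, g k ^ 2) := by ring
  -- telescoping bound: ∀ N, g m ^ 2 ≤ g (m + N) ^ 2 + ∑' v
  have hN : ∀ N : ℕ, g m ^ 2 ≤ g (m + N) ^ 2 + ∑' k, v k := by
    intro N
    set u : ℕ → ℝ := fun n => g (m + n) ^ 2 with hu
    have htel : ∑ i ∈ Finset.range N, (u i - u (i + 1)) = u 0 - u N :=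
      Finset.sum_range_sub' u N
    have hmap : ∑ i ∈ Finset.range N, v (m + i) ≤ ∑' k, v k := by
      have h4 : ∑ i ∈ Finset.range N, v (m + i) =
          ∑ k ∈ (Finset.range N).map ⟨fun n : ℕ => m + n, fun x y hxy => by simpa using hxy⟩,
            v k := by
        rw [Finset.sum_map]
        rfl
      rw [h4]
      exact Summable.sum_le_tsum _ (fun k _ => abs_nonneg _) hvsum
    have habs : ∑ i ∈ Finset.range N, (u i - u (i + 1)) ≤ ∑ i ∈ Finset.range N, v (m + i) := by
      apply Finset.sum_le_sum
      intro i _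
      have : v (m + i) = |u (i+1) - u i| := by
        simp only [hv, hu]
        norm_cast
        rw [show m + (i : ℤ) + 1 = m + ((i : ℤ) + 1) by ring]
        norm_cast
      rw [this, abs_sub_comm]
      exact le_abs_self _
    have : u 0 - u N ≤ ∑' k, v k := le_trans (htel ▸ habs) hmap
    have hu0 : u 0 = g m ^ 2 := by simp [hu]
    have huN : u N = g (m + (N : ℤ)) ^ 2 := rfl
    linarith
  -- take the limit N → ∞
  have hlim0 : Tendsto (fun N : ℕ => g (m + N) ^ 2) atTop (𝓝 0) := by
    have hcof : Tendsto (fun N : ℕ => m + (N : ℤ)) atTop (Filter.cofinite) := by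
      rw [Int.cofinite_eq]
      exact (tendsto_atTop_add_const_left _ m tendsto_natCast_atTop_atTop).mono_right
        le_sup_right
    exact (hf.tendsto_cofinite_zero).comp hcof
  have hlim : Tendsto (fun N : ℕ => g (m + N) ^ 2 + ∑' k, v k) atTop (𝓝 (0 + ∑' k, v k)) :=
    hlim0.add tendsto_const_nhds
  have : g m ^ 2 ≤ 0 + ∑' k, v k := ge_of_tendsto' hlim hN
  calc g m ^ 2 ≤ ∑' k, v k := by linarith
    _ ≤ _ := hvtsum

theorem discrete_GN (q : ℝ) (hq : 2 < q) :
    ∃ C > 0, ∀ h : ℝ, h ∈ Set.Ioc (0 : ℝ) 1 → ∀ f : ℤ → ℂ,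
      Summable (fun m : ℤ => ‖f m‖ ^ 2) →
      (h * ∑' m : ℤ, ‖f m‖ ^ q) ^ (1 / q) ≤
        C * (L2h h f) ^ (1 - (1 / 2 - 1 / q)) * (L2h h (Dh h f)) ^ (1 / 2 - 1 / q) := by
  have hq0 : (0:ℝ) < q := by linarith
  refine ⟨2, by norm_num, ?_⟩
  rintro h ⟨hh0, hh1⟩ f hf
  set θ : ℝ := 1 / 2 - 1 / q with hθ
  set A : ℝ := L2h h f with hA
  set B : ℝ := L2h h (Dh h f) with hB
  have hA0 : 0 ≤ A := Real.sqrt_nonneg _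
  have hB0 : 0 ≤ B := Real.sqrt_nonneg _
  set S : ℝ := Real.sqrt (∑' k : ℤ, ‖f (k + 1) - f k‖ ^ 2) with hS
  set T : ℝ := Real.sqrt (∑' k : ℤ, ‖f k‖ ^ 2) with hT
  have hg2nn : (0:ℝ) ≤ ∑' k : ℤ, ‖f k‖ ^ 2 := tsum_nonneg fun k => sq_nonneg _
  have hd2nn : (0:ℝ) ≤ ∑' k : ℤ, ‖f (k+1) - f k‖ ^ 2 := tsum_nonneg fun k => sq_nonneg _
  -- compute ∑' ‖Dh h f‖²
  have hDnorm : ∀ m : ℤ, ‖Dh h f m‖ ^ 2 = ‖f (m + 1) - f m‖ ^ 2 / h ^ 2 := by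
    intro m
    rw [Dh]
    rw [norm_div]
    rw [div_pow]
    congr 1
    rw [Complex.norm_real, Real.norm_eq_abs, abs_of_pos hh0]
  have hDsum : ∑' m : ℤ, ‖Dh h f m‖ ^ 2 = (∑' k : ℤ, ‖f (k+1) - f k‖ ^ 2) / h ^ 2 := by
    simp_rw [hDnorm]
    exact tsum_div_const
  -- A * B = S * T
  have hAB : A * B = S * T := by
    rw [hA, hB, hS, hT, L2h, L2h, hDsum, ← Real.sqrt_mul (by positivity),
      ← Real.sqrt_mul hd2nn]
    congr 1
    field_simp
  -- pointwise sup bound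
  have hsup : ∀ m : ℤ, ‖f m‖ ^ 2 ≤ 2 * A * B := by
    intro m
    calc ‖f m‖ ^ 2 ≤ 2 * S * T := sup_bound hf m
      _ = 2 * A * B := by rw [mul_assoc, ← hAB, mul_assoc]
  have hABnn : (0:ℝ) ≤ 2 * A * B := by positivity
  set K : ℝ := (2 * A * B) ^ ((q - 2) / 2) with hK
  have hKnn : 0 ≤ K := Real.rpow_nonneg hABnn _
  -- pointwise bound on ‖f m‖ ^ q
  have hptq : ∀ m : ℤ, ‖f m‖ ^ q ≤ K * ‖f m‖ ^ 2 := by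
    intro m
    rcases eq_or_lt_of_le (norm_nonneg (f m)) with h0 | hpos
    · rw [← h0, Real.zero_rpow (ne_of_gt hq0)]
      positivity
    · have h1 : ‖f m‖ ≤ Real.sqrt (2 * A * B) :=
        Real.le_sqrt' hpos |>.mpr (hsup m)
      have h2 : ‖f m‖ ^ (q - 2) ≤ K := by
        calc ‖f m‖ ^ (q - 2) ≤ (Real.sqrt (2 * A * B)) ^ (q - 2) :=
            Real.rpow_le_rpow (le_of_lt hpos) h1 (by linarith)
          _ = K := by
            rw [hK, Real.sqrt_eq_rpow, ← Real.rpow_mul hABnn]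
            congr 1
            ring
      calc ‖f m‖ ^ q = ‖f m‖ ^ (q - 2) * ‖f m‖ ^ (2:ℝ) := by
            rw [← Real.rpow_add hpos]; ring_nf
        _ = ‖f m‖ ^ (q - 2) * ‖f m‖ ^ 2 := by
            rw [show ((2:ℝ)) = ((2:ℕ):ℝ) by norm_num, Real.rpow_natCast]
        _ ≤ K * ‖f m‖ ^ 2 := mul_le_mul_of_nonneg_right h2 (sq_nonneg _)
  have hqsum : Summable fun m : ℤ => ‖f m‖ ^ q :=
    Summable.of_nonneg_of_le (fun m => Real.rpow_nonneg (norm_nonneg _) _) hptq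
      (hf.mul_left K)
  -- main tsum bound
  have hmain : h * ∑' m : ℤ, ‖f m‖ ^ q ≤ K * A ^ 2 := by
    have h1 : ∑' m : ℤ, ‖f m‖ ^ q ≤ K * ∑' m : ℤ, ‖f m‖ ^ 2 := by
      calc ∑' m : ℤ, ‖f m‖ ^ q ≤ ∑' m : ℤ, K * ‖f m‖ ^ 2 :=
          Summable.tsum_le_tsum hptq hqsum (hf.mul_left K)
        _ = K * ∑' m : ℤ, ‖f m‖ ^ 2 := tsum_mul_left
    have hA2 : A ^ 2 = h * ∑' m : ℤ, ‖f m‖ ^ 2 := Real.sq_sqrt (by positivity)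
    calc h * ∑' m : ℤ, ‖f m‖ ^ q ≤ h * (K * ∑' m : ℤ, ‖f m‖ ^ 2) := by
          exact mul_le_mul_of_nonneg_left h1 (le_of_lt hh0)
      _ = K * A ^ 2 := by rw [hA2]; ring
  have hLnn : (0:ℝ) ≤ h * ∑' m : ℤ, ‖f m‖ ^ q :=
    mul_nonneg hh0.le (tsum_nonneg fun m => Real.rpow_nonneg (norm_nonneg _) _)
  have step1 : (h * ∑' m : ℤ, ‖f m‖ ^ q) ^ (1/q) ≤ (K * A ^ 2) ^ (1/q) :=
    Real.rpow_le_rpow hLnn hmain (by positivity)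
  -- now deal with degenerate and main cases
  rcases eq_or_lt_of_le hA0 with hA0' | hApos
  · -- A = 0 : f ≡ 0
    have hfz : ∀ m : ℤ, ‖f m‖ = 0 := by
      intro m
      have h5 := hsup m
      rw [← hA0'] at h5
      have h7 : ‖f m‖ ^ 2 = 0 := le_antisymm (by linarith) (sq_nonneg _)
      exact pow_eq_zero_iff (two_ne_zero) |>.mp h7
    have : (h * ∑' m : ℤ, ‖f m‖ ^ q) = 0 := by
      have hz : ∀ m : ℤ, ‖f m‖ ^ q = 0 := fun m => by
        rw [hfz m, Real.zero_rpow (ne_of_gt hq0)]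
      rw [tsum_congr hz, tsum_zero, mul_zero]
    rw [this, Real.zero_rpow (by positivity)]
    positivity
  rcases eq_or_lt_of_le hB0 with hB0' | hBpos
  · -- B = 0 : f ≡ 0 as well
    have hfz : ∀ m : ℤ, ‖f m‖ = 0 := by
      intro m
      have h5 := hsup m
      rw [← hB0'] at h5
      have h7 : ‖f m‖ ^ 2 = 0 := le_antisymm (by linarith) (sq_nonneg _)
      exact pow_eq_zero_iff (two_ne_zero) |>.mp h7
    have : (h * ∑' m : ℤ, ‖f m‖ ^ q) = 0 := by
      have hz : ∀ m : ℤ, ‖f m‖ ^ q = 0 := fun m => by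
        rw [hfz m, Real.zero_rpow (ne_of_gt hq0)]
      rw [tsum_congr hz, tsum_zero, mul_zero]
    rw [this, Real.zero_rpow (by positivity)]
    positivity
  -- main case: A > 0, B > 0
  refine le_trans step1 ?_
  have hθq : (q - 2)/2 * (1/q) = θ := by
    rw [hθ]
    field_simp
  have key : (K * A ^ 2) ^ (1/q) = 2 ^ θ * A ^ (1 - θ) * B ^ θ := by
    have hA2 : (A:ℝ) ^ 2 = A ^ (2:ℝ) := by
      rw [show ((2:ℝ)) = ((2:ℕ):ℝ) by norm_num, Real.rpow_natCast]
    have e1 : K = 2 ^ ((q-2)/2) * A ^ ((q-2)/2) * B ^ ((q-2)/2) := by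
      rw [hK, Real.mul_rpow (by positivity) hB0, Real.mul_rpow (by positivity) hA0]
    have eA : A ^ ((q-2)/2 * (1/q)) * A ^ ((2:ℝ) * (1/q)) = A ^ (1 - θ) := by
      rw [← Real.rpow_add hApos]
      congr 1
      rw [hθ]; field_simp; ring
    calc (K * A ^ 2) ^ (1/q)
        = (2 ^ ((q-2)/2) * A ^ ((q-2)/2) * B ^ ((q-2)/2) * A ^ (2:ℝ)) ^ (1/q) := by
          rw [e1, hA2]
      _ = 2 ^ ((q-2)/2 * (1/q)) * A ^ ((q-2)/2 * (1/q)) * B ^ ((q-2)/2 * (1/q)) *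
            A ^ ((2:ℝ) * (1/q)) := by
          rw [Real.mul_rpow (by positivity) (by positivity),
            Real.mul_rpow (by positivity) (by positivity),
            Real.mul_rpow (by positivity) (by positivity),
            ← Real.rpow_mul (by norm_num : (0:ℝ) ≤ 2),
            ← Real.rpow_mul hA0, ← Real.rpow_mul hB0, ← Real.rpow_mul hA0]
      _ = 2 ^ ((q-2)/2 * (1/q)) * (A ^ ((q-2)/2 * (1/q)) * A ^ ((2:ℝ) * (1/q))) *
            B ^ ((q-2)/2 * (1/q)) := by ring
      _ = 2 ^ θ * A ^ (1 - θ) * B ^ θ := by rw [eA, hθq]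
  rw [key]
  have h2θ : (2:ℝ) ^ θ ≤ 2 := by
    have hθ1 : θ ≤ 1 := by
      rw [hθ]
      have : 0 < 1/q := by positivity
      linarith
    calc (2:ℝ) ^ θ ≤ (2:ℝ) ^ (1:ℝ) :=
        Real.rpow_le_rpow_of_exponent_le one_le_two hθ1
      _ = 2 := Real.rpow_one 2
  have : (0:ℝ) ≤ A ^ (1 - θ) * B ^ θ := by positivity
  calc 2 ^ θ * A ^ (1 - θ) * B ^ θ = 2 ^ θ * (A ^ (1 - θ) * B ^ θ) := by ring
    _ ≤ 2 * (A ^ (1 - θ) * B ^ θ) := mul_le_mul_of_nonneg_right h2θ this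
    _ = 2 * A ^ (1 - θ) * B ^ θ := by ring
end

section
/- Equivalence of discrete seminorms: for h > 0 and f ∈ L²_h(hℤ), (2/π) ‖f‖_{Ḣ¹_h} ≤ ‖D⁺_h f‖_{L²_h} ≤ ‖f‖_{Ḣ¹_h}, where ‖f‖_{Ḣ¹_h}² = ∫_{−π/h}^{π/h} ξ² |f̂(ξ)|² dξ. -/
open MeasureTheory Real

noncomputable def fhat (h : ℝ) (f : ℤ → ℂ) (ξ : ℝ) : ℂ :=
  ((h / Real.sqrt (2 * π) : ℝ) : ℂ) *
    ∑' m : ℤ, f m * Complex.exp (-Complex.I * ((h * m : ℝ) : ℂ) * (ξ : ℂ))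

/-!
Plancherel turns `‖D⁺_h f‖²` into `∫ |σ(ξ)|² |f̂(ξ)|²` over `[-π/h, π/h]`, where
`σ(ξ) = (e^{ihξ} - 1)/h` is the multiplier of `D⁺_h`; for summable `f` Plancherel itself follows
from the orthogonality of the waves `e^{-ihmξ}` on that interval, after exchanging sums and
integrals. Since `|σ(ξ)| = 2|sin(hξ/2)|/h` and `|hξ/2| ≤ π/2` there, the bounds
`(2/π)|θ| ≤ |sin θ| ≤ |θ|` give `(2/π)|ξ| ≤ |σ(ξ)| ≤ |ξ|`.
-/

lemma intervalIntegral_tsum_mul_of_norm_le {ι : Type*} [Countable ι] {a b : ℝ} {c : ι → ℂ}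
    (hc : Summable fun n => ‖c n‖) {φ : ι → ℝ → ℂ} (hφ : ∀ n, Continuous (φ n)) {B : ℝ}
    (hB : ∀ n ξ, ‖φ n ξ‖ ≤ B) :
    ∫ ξ in a..b, ∑' n, c n * φ n ξ = ∑' n, c n * ∫ ξ in a..b, φ n ξ := by
  let F : ι → C(ℝ, ℂ) := fun n => ⟨fun ξ => c n * φ n ξ, continuous_const.mul (hφ n)⟩
  simp_rw [← intervalIntegral.integral_const_mul]
  refine (intervalIntegral.tsum_intervalIntegral_eq_of_summable_norm (f := F) ?_).symm
  refine Summable.of_nonneg_of_le (fun _ => norm_nonneg _) (fun n => ?_) (hc.mul_right B)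
  refine (ContinuousMap.norm_le _ ?_).2 fun ξ => ?_
  · exact mul_nonneg (norm_nonneg _) ((norm_nonneg _).trans (hB n 0))
  · simp only [ContinuousMap.restrict_apply, ContinuousMap.coe_mk, norm_mul, F]
    gcongr
    exact hB _ _

namespace DiscreteFourier

open Complex in
noncomputable def wave (h : ℝ) (m : ℤ) (ξ : ℝ) : ℂ := exp (-I * ((h * m : ℝ) : ℂ) * (ξ : ℂ))

noncomputable def waveSum (h : ℝ) (g : ℤ → ℂ) (ξ : ℝ) : ℂ := ∑' m : ℤ, g m * wave h m ξ

lemma fhat_eq_mul_waveSum (h : ℝ) (g : ℤ → ℂ) (ξ : ℝ) :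
    fhat h g ξ = ((h / √(2 * π) : ℝ) : ℂ) * waveSum h g ξ := rfl

lemma wave_eq_exp_ofReal_mul_I (h : ℝ) (m : ℤ) (ξ : ℝ) :
    wave h m ξ = Complex.exp ((-(h * m * ξ) : ℝ) * Complex.I) := by
  rw [wave]; push_cast; ring_nf

@[simp]
lemma norm_wave (h : ℝ) (m : ℤ) (ξ : ℝ) : ‖wave h m ξ‖ = 1 := by
  rw [wave_eq_exp_ofReal_mul_I, Complex.norm_exp_ofReal_mul_I]

@[fun_prop]
lemma continuous_wave (h : ℝ) (m : ℤ) : Continuous (wave h m) := by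
  unfold wave; fun_prop

lemma conj_wave_mul_wave (h : ℝ) (k n : ℤ) (ξ : ℝ) :
    (starRingEnd ℂ) (wave h k ξ) * wave h n ξ = wave h (n - k) ξ := by
  simp only [wave_eq_exp_ofReal_mul_I, ← Complex.exp_conj, map_mul, Complex.conj_ofReal,
    Complex.conj_I, ← Complex.exp_add]
  push_cast; ring_nf

lemma wave_sub_one (h : ℝ) (m : ℤ) (ξ : ℝ) :
    wave h (m - 1) ξ = Complex.exp (Complex.I * ((h * ξ : ℝ) : ℂ)) * wave h m ξ := by
  rw [wave, wave, ← Complex.exp_add]; push_cast; ring_nf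

lemma integral_wave {h : ℝ} (hh : 0 < h) (k : ℤ) :
    ∫ ξ in -(π / h)..π / h, wave h k ξ = if k = 0 then ((2 * π / h : ℝ) : ℂ) else 0 := by
  split_ifs with hk
  · simp [hk, wave]
    ring
  · have hc : -Complex.I * ((h * k : ℝ) : ℂ) ≠ 0 := by
      simp [hh.ne', hk, Complex.I_ne_zero]
    simp only [wave]
    rw [integral_exp_mul_complex hc, div_eq_zero_iff, sub_eq_zero]
    left
    -- the endpoints differ by exactly `k` periods
    refine Complex.exp_eq_exp_iff_exists_int.2 ⟨-k, ?_⟩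
    have : (h : ℂ) ≠ 0 := by exact_mod_cast hh.ne'
    push_cast
    field_simp
    ring

variable {h : ℝ} {g : ℤ → ℂ}

lemma summable_mul_wave (hg : Summable fun m => ‖g m‖) (ξ : ℝ) :
    Summable fun m => g m * wave h m ξ :=
  .of_norm (by simpa only [norm_mul, norm_wave, mul_one] using hg)

lemma norm_waveSum_le (hg : Summable fun m => ‖g m‖) (ξ : ℝ) :
    ‖waveSum h g ξ‖ ≤ ∑' m, ‖g m‖ :=
  calc ‖waveSum h g ξ‖ ≤ ∑' m, ‖g m * wave h m ξ‖ := norm_tsum_le_tsum_norm (by simpa using hg)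
    _ = ∑' m, ‖g m‖ := by simp

lemma continuous_waveSum (hg : Summable fun m => ‖g m‖) : Continuous (waveSum h g) :=
  continuous_tsum (fun m => by fun_prop) hg fun m ξ => by simp

lemma continuous_fhat (hg : Summable fun m => ‖g m‖) : Continuous (fhat h g) :=
  continuous_const.mul (continuous_waveSum hg)

lemma conj_wave_mul_waveSum (k : ℤ) (ξ : ℝ) :
    (starRingEnd ℂ) (wave h k ξ) * waveSum h g ξ = ∑' n, g n * wave h (n - k) ξ := by
  rw [waveSum, ← tsum_mul_left]
  congr 1 with n
  rw [← conj_wave_mul_wave]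
  ring

lemma conj_waveSum (ξ : ℝ) :
    (starRingEnd ℂ) (waveSum h g ξ)
      = ∑' m, (starRingEnd ℂ) (g m) * (starRingEnd ℂ) (wave h m ξ) := by
  simp_rw [waveSum, Complex.conj_tsum, map_mul]

lemma integral_conj_wave_mul_waveSum (hh : 0 < h) (hg : Summable fun m => ‖g m‖) (k : ℤ) :
    ∫ ξ in -(π / h)..π / h, (starRingEnd ℂ) (wave h k ξ) * waveSum h g ξ
      = ((2 * π / h : ℝ) : ℂ) * g k := by
  simp_rw [conj_wave_mul_waveSum, intervalIntegral_tsum_mul_of_norm_le hg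
    (fun n => continuous_wave h _) (fun n ξ => (norm_wave h _ ξ).le), integral_wave hh,
    sub_eq_zero, mul_ite, mul_zero, tsum_ite_eq, mul_comm]

lemma integral_norm_waveSum_sq (hh : 0 < h) (hg : Summable fun m => ‖g m‖) :
    ∫ ξ in -(π / h)..π / h, ‖waveSum h g ξ‖ ^ 2 = 2 * π / h * ∑' m, ‖g m‖ ^ 2 := by
  apply Complex.ofReal_injective
  calc ((∫ ξ in -(π / h)..π / h, ‖waveSum h g ξ‖ ^ 2 : ℝ) : ℂ)
      = ∫ ξ in -(π / h)..π / h, (starRingEnd ℂ) (waveSum h g ξ) * waveSum h g ξ := by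
        simp_rw [Complex.conj_mul', ← intervalIntegral.integral_ofReal, Complex.ofReal_pow]
    _ = ∫ ξ in -(π / h)..π / h,
          ∑' m, (starRingEnd ℂ) (g m) * ((starRingEnd ℂ) (wave h m ξ) * waveSum h g ξ) := by
        simp_rw [conj_waveSum, ← tsum_mul_right, mul_assoc]
    _ = ∑' m, (starRingEnd ℂ) (g m) * (((2 * π / h : ℝ) : ℂ) * g m) := by
        rw [intervalIntegral_tsum_mul_of_norm_le (by simpa using hg)
          (φ := fun m ξ => (starRingEnd ℂ) (wave h m ξ) * waveSum h g ξ)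
          (fun m => (Complex.continuous_conj.comp (continuous_wave h m)).mul
            (continuous_waveSum hg)) (fun m ξ => by simpa using norm_waveSum_le hg ξ)]
        simp_rw [integral_conj_wave_mul_waveSum hh hg]
    _ = ((2 * π / h * ∑' m, ‖g m‖ ^ 2 : ℝ) : ℂ) := by
        simp_rw [mul_left_comm _ ((2 * π / h : ℝ) : ℂ), Complex.conj_mul', tsum_mul_left]
        push_cast
        rfl

lemma integral_norm_fhat_sq (hh : 0 < h) (hg : Summable fun m => ‖g m‖) :
    ∫ ξ in -(π / h)..π / h, ‖fhat h g ξ‖ ^ 2 = h * ∑' m, ‖g m‖ ^ 2 := by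
  simp_rw [fhat_eq_mul_waveSum, norm_mul, mul_pow]
  rw [intervalIntegral.integral_const_mul, integral_norm_waveSum_sq hh hg, Complex.norm_real,
    Real.norm_eq_abs, sq_abs, div_pow, Real.sq_sqrt (by positivity)]
  field_simp

lemma summable_norm_Dh {f : ℤ → ℂ} (hf : Summable fun m => ‖f m‖) :
    Summable fun m => ‖Dh h f m‖ := by
  rw [summable_norm_iff] at hf ⊢
  exact ((hf.comp_injective (add_left_injective 1)).sub hf).div_const _

lemma waveSum_shift (ξ : ℝ) :
    waveSum h (fun m => g (m + 1)) ξ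
      = Complex.exp (Complex.I * ((h * ξ : ℝ) : ℂ)) * waveSum h g ξ := by
  calc ∑' m, g (m + 1) * wave h m ξ = ∑' m, g (m + 1) * wave h (m + 1 - 1) ξ := by simp
    _ = ∑' m, g m * wave h (m - 1) ξ :=
        (Equiv.addRight 1).tsum_eq (fun m => g m * wave h (m - 1) ξ)
    _ = _ := by simp_rw [wave_sub_one, waveSum, ← tsum_mul_left, mul_left_comm]

noncomputable def forwardDiffSymbol (h ξ : ℝ) : ℂ :=
  (Complex.exp (Complex.I * ((h * ξ : ℝ) : ℂ)) - 1) / h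

lemma fhat_Dh {f : ℤ → ℂ} (hf : Summable fun m => ‖f m‖) (ξ : ℝ) :
    fhat h (Dh h f) ξ = forwardDiffSymbol h ξ * fhat h f ξ := by
  have hDh : waveSum h (Dh h f) ξ = (waveSum h (fun m => f (m + 1)) ξ - waveSum h f ξ) / h := by
    rw [waveSum, waveSum, waveSum, ← Summable.tsum_sub, ← tsum_div_const]
    · congr 1 with m; rw [Dh]; ring
    · exact summable_mul_wave (hf.comp_injective (add_left_injective 1)) ξ
    · exact summable_mul_wave hf ξ
  rw [fhat_eq_mul_waveSum, fhat_eq_mul_waveSum, hDh, waveSum_shift, forwardDiffSymbol]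
  ring

lemma norm_forwardDiffSymbol_le (hh : 0 < h) (ξ : ℝ) :
    ‖forwardDiffSymbol h ξ‖ ≤ |ξ| := by
  rw [forwardDiffSymbol, norm_div, Complex.norm_real, Real.norm_of_nonneg hh.le, div_le_iff₀ hh]
  calc _ ≤ ‖h * ξ‖ := Real.norm_exp_I_mul_ofReal_sub_one_le
    _ = |ξ| * h := by rw [Real.norm_eq_abs, abs_mul, abs_of_pos hh, mul_comm]

lemma mul_abs_le_norm_forwardDiffSymbol (hh : 0 < h) {ξ : ℝ} (hξ : |ξ| ≤ π / h) :
    2 / π * |ξ| ≤ ‖forwardDiffSymbol h ξ‖ := by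
  have hθ : |h * ξ / 2| ≤ π / 2 := by
    rw [abs_div, abs_mul, abs_of_pos hh, abs_two, mul_comm]
    linarith [(le_div_iff₀ hh).1 hξ]
  rw [forwardDiffSymbol, norm_div, Complex.norm_real, Real.norm_of_nonneg hh.le, le_div_iff₀ hh,
    Complex.norm_exp_I_mul_ofReal_sub_one, Real.norm_eq_abs, abs_mul, abs_two]
  calc 2 / π * |ξ| * h = 2 * (2 / π * |h * ξ / 2|) := by
        rw [abs_div, abs_mul, abs_of_pos hh, abs_two]; ring
    _ ≤ 2 * |Real.sin (h * ξ / 2)| := by gcongr; exact Real.mul_abs_le_abs_sin hθ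

end DiscreteFourier

open DiscreteFourier

theorem seminorm_equivalence (h : ℝ) (hh : 0 < h) (f : ℤ → ℂ)
    (hf : Summable fun m : ℤ => ‖f m‖) :
    (2 / π) * Real.sqrt (∫ ξ in (-(π / h))..(π / h), ξ ^ 2 * ‖fhat h f ξ‖ ^ 2) ≤
        L2h h (Dh h f) ∧
      L2h h (Dh h f) ≤
        Real.sqrt (∫ ξ in (-(π / h))..(π / h), ξ ^ 2 * ‖fhat h f ξ‖ ^ 2) := by
  have hab : -(π / h) ≤ π / h := by linarith [div_pos pi_pos hh]
  have hfD := summable_norm_Dh (h := h) hf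
  have hL : L2h h (Dh h f) = √(∫ ξ in -(π / h)..π / h, ‖fhat h (Dh h f) ξ‖ ^ 2) := by
    rw [L2h, integral_norm_fhat_sq hh hfD]
  have hD_int : IntervalIntegrable (fun ξ => ‖fhat h (Dh h f) ξ‖ ^ 2) volume (-(π / h)) (π / h) :=
    ((continuous_fhat hfD).norm.pow 2).intervalIntegrable _ _
  have hH1_int : IntervalIntegrable (fun ξ => ξ ^ 2 * ‖fhat h f ξ‖ ^ 2) volume (-(π / h)) (π / h) :=
    ((continuous_id.pow 2).mul ((continuous_fhat hf).norm.pow 2)).intervalIntegrable _ _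
  rw [hL]
  refine ⟨?_, sqrt_le_sqrt (intervalIntegral.integral_mono_on hab hD_int hH1_int fun ξ _ => ?_)⟩
  · rw [← sqrt_sq (by positivity : 0 ≤ 2 / π), ← sqrt_mul (sq_nonneg _),
      ← intervalIntegral.integral_const_mul]
    refine sqrt_le_sqrt (intervalIntegral.integral_mono_on hab (hH1_int.const_mul _) hD_int
      fun ξ hξ => ?_)
    rw [fhat_Dh hf, norm_mul, mul_pow, ← mul_assoc, ← sq_abs ξ, ← mul_pow]
    gcongr
    exact mul_abs_le_norm_forwardDiffSymbol hh (abs_le.2 hξ)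
  · rw [fhat_Dh hf, norm_mul, mul_pow, ← sq_abs ξ]
    gcongr
    exact norm_forwardDiffSymbol_le hh ξ
end

section
/- The linear interpolation is controlled by the discrete norm: there is a constant C independent of h ∈ (0,1] such that for every f_h ∈ L²_h(hℤ), ‖p_h f_h‖_{H¹(ℝ)} ≤ C ( ‖f_h‖_{L²_h}² + ‖D⁺_h f_h‖_{L²_h}² )^{1/2}, where p_h f_h is the piecewise linear interpolation of f_h. -/
open MeasureTheory Real

noncomputable def ph (h : ℝ) (f : ℤ → ℂ) : ℝ → ℂ := fun x =>
  f ⌊x / h⌋ + (f (⌊x / h⌋ + 1) - f ⌊x / h⌋) * (((x - h * (⌊x / h⌋ : ℝ)) / h : ℝ) : ℂ)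

/-- Key estimate: a nonnegative measurable function bounded by `c m` on each open
cell `((m:ℝ)*h, ((m:ℝ)+1)*h)` has integral at most `h * ∑' c`. -/
lemma piece_bound {h : ℝ} (hh : 0 < h) (F : ℝ → ℝ) (hFm : Measurable F)
    (hF0 : ∀ x, 0 ≤ F x) (c : ℤ → ℝ) (hc0 : ∀ m, 0 ≤ c m) (hcs : Summable c)
    (hb : ∀ m : ℤ, ∀ x ∈ Set.Ioo ((m : ℝ) * h) (((m : ℝ) + 1) * h), F x ≤ c m) :
    ∫ x : ℝ, F x ≤ h * ∑' m : ℤ, c m := by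
  set s : ℤ → Set ℝ := fun m => Set.Ico ((m : ℝ) * h) (((m : ℝ) + 1) * h) with hs
  have hmeas : ∀ m : ℤ, MeasurableSet (s m) := fun m => measurableSet_Ico
  have hdisj : Pairwise (Function.onFun Disjoint s) := by
    intro m n hmn
    refine Set.Ico_disjoint_Ico.2 ?_
    rcases hmn.lt_or_gt with H | H
    · have : ((m : ℝ) + 1) ≤ (n : ℝ) := by exact_mod_cast Int.add_one_le_iff.mpr H
      exact le_trans (min_le_left _ _)
        (le_trans (mul_le_mul_of_nonneg_right this hh.le) (le_max_right _ _))
    · have : ((n : ℝ) + 1) ≤ (m : ℝ) := by exact_mod_cast Int.add_one_le_iff.mpr H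
      exact le_trans (min_le_right _ _)
        (le_trans (mul_le_mul_of_nonneg_right this hh.le) (le_max_left _ _))
  have hcov : (⋃ m : ℤ, s m) = Set.univ := by
    ext x
    simp only [Set.mem_iUnion, Set.mem_Ico, Set.mem_univ, iff_true, hs]
    refine ⟨⌊x / h⌋, ?_, ?_⟩
    · exact (le_div_iff₀ hh).1 (Int.floor_le (x / h))
    · exact (div_lt_iff₀ hh).1 (Int.lt_floor_add_one (x / h))
  have hvol : ∀ m : ℤ, volume (Set.Ioo ((m : ℝ) * h) (((m : ℝ) + 1) * h)) = ENNReal.ofReal h := by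
    intro m
    rw [Real.volume_Ioo]
    congr 1
    ring
  have hlint : (∫⁻ x : ℝ, ENNReal.ofReal (F x)) ≤ ENNReal.ofReal (h * ∑' m : ℤ, c m) := by
    calc (∫⁻ x : ℝ, ENNReal.ofReal (F x))
        = ∫⁻ x in ⋃ m : ℤ, s m, ENNReal.ofReal (F x) := by
          rw [hcov, Measure.restrict_univ]
      _ = ∑' m : ℤ, ∫⁻ x in s m, ENNReal.ofReal (F x) :=
          lintegral_iUnion hmeas hdisj _
      _ ≤ ∑' m : ℤ, ENNReal.ofReal (c m) * ENNReal.ofReal h := by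
          refine ENNReal.tsum_le_tsum fun m => ?_
          have h1 : (∫⁻ x in s m, ENNReal.ofReal (F x))
              = ∫⁻ x in Set.Ioo ((m : ℝ) * h) (((m : ℝ) + 1) * h), ENNReal.ofReal (F x) :=
            (setLIntegral_congr (Ioo_ae_eq_Ico (a := (m : ℝ) * h) (b := ((m : ℝ) + 1) * h))).symm
          rw [h1]
          calc (∫⁻ x in Set.Ioo ((m : ℝ) * h) (((m : ℝ) + 1) * h), ENNReal.ofReal (F x))
              ≤ ∫⁻ _ in Set.Ioo ((m : ℝ) * h) (((m : ℝ) + 1) * h), ENNReal.ofReal (c m) :=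
                setLIntegral_mono' measurableSet_Ioo
                  (fun x hx => ENNReal.ofReal_le_ofReal (hb m x hx))
            _ = ENNReal.ofReal (c m) * ENNReal.ofReal h := by
                rw [setLIntegral_const, hvol m]
      _ = (∑' m : ℤ, ENNReal.ofReal (c m)) * ENNReal.ofReal h := ENNReal.tsum_mul_right
      _ = ENNReal.ofReal (h * ∑' m : ℤ, c m) := by
          rw [← ENNReal.ofReal_tsum_of_nonneg hc0 hcs, ← ENNReal.ofReal_mul (tsum_nonneg hc0)]
          congr 1
          ring
  rw [integral_eq_lintegral_of_nonneg_ae (Filter.Eventually.of_forall hF0)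
    hFm.aestronglyMeasurable]
  refine le_trans (ENNReal.toReal_mono ENNReal.ofReal_ne_top hlint) ?_
  rw [ENNReal.toReal_ofReal (mul_nonneg hh.le (tsum_nonneg hc0))]

lemma floor_eq_on_Ioo {h : ℝ} (hh : 0 < h) (m : ℤ) (x : ℝ)
    (hx : x ∈ Set.Ioo ((m : ℝ) * h) (((m : ℝ) + 1) * h)) : ⌊x / h⌋ = m := by
  rw [Int.floor_eq_iff]
  constructor
  · exact (le_div_iff₀ hh).2 hx.1.le
  · exact (div_lt_iff₀ hh).2 (by push_cast; linarith [hx.2])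

theorem interpolation_H1_bound :
    ∃ C > 0, ∀ h : ℝ, h ∈ Set.Ioc (0 : ℝ) 1 → ∀ f : ℤ → ℂ,
      Summable (fun m : ℤ => ‖f m‖ ^ 2) →
      Real.sqrt ((∫ x : ℝ, ‖ph h f x‖ ^ 2) + ∫ x : ℝ, ‖deriv (ph h f) x‖ ^ 2) ≤
        C * Real.sqrt ((L2h h f) ^ 2 + (L2h h (Dh h f)) ^ 2) := by
  refine ⟨4, by norm_num, ?_⟩
  intro h hh f hf
  obtain ⟨hh0, _hh1⟩ := hh
  set a : ℤ → ℝ := fun m => ‖f m‖ ^ 2 with ha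
  set d : ℤ → ℝ := fun m => ‖Dh h f m‖ ^ 2 with hd
  have ha0 : ∀ m, 0 ≤ a m := fun m => sq_nonneg _
  have hd0 : ∀ m, 0 ≤ d m := fun m => sq_nonneg _
  have hinj : Function.Injective (fun m : ℤ => m + 1) := add_left_injective 1
  have hfs' : Summable (fun m : ℤ => a (m + 1)) := hf.comp_injective hinj
  have hne : h ≠ 0 := hh0.ne'
  have hds : Summable d := by
    refine Summable.of_nonneg_of_le hd0 (fun m => ?_)
      (((hf.mul_left (2 / h ^ 2)).add (hfs'.mul_left (2 / h ^ 2))))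
    have hnh : ‖(h : ℂ)‖ = h := by
      rw [Complex.norm_real, Real.norm_eq_abs, abs_of_pos hh0]
    have hdm : d m = ‖f (m + 1) - f m‖ ^ 2 / h ^ 2 := by
      simp only [hd, Dh, norm_div, hnh, div_pow]
    have key : ‖f (m + 1) - f m‖ ^ 2 ≤ 2 * a (m + 1) + 2 * a m := by
      have h1 := norm_sub_le (f (m + 1)) (f m)
      simp only [ha]
      nlinarith [pow_le_pow_left₀ (norm_nonneg (f (m + 1) - f m)) h1 2,
        sq_nonneg (‖f (m + 1)‖ - ‖f m‖)]
    have hh2 : (0:ℝ) < h ^ 2 := by positivity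
    show d m ≤ 2 / h ^ 2 * a m + 2 / h ^ 2 * a (m + 1)
    rw [hdm, div_le_iff₀ hh2]
    have heq : (2 / h ^ 2 * a m + 2 / h ^ 2 * a (m + 1)) * h ^ 2
        = 2 * a (m + 1) + 2 * a m := by
      field_simp
      ring
    rw [heq]
    exact key
  -- measurability of ph
  have hflm : Measurable fun x : ℝ => (⌊x / h⌋ : ℤ) :=
    Int.measurable_floor.comp (measurable_id.div_const h)
  have hphm : Measurable (ph h f) := by
    have hfm : Measurable f := measurable_of_countable f
    have m1 : Measurable fun x : ℝ => f ⌊x / h⌋ := hfm.comp hflm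
    have m2 : Measurable fun x : ℝ => f (⌊x / h⌋ + 1) :=
      hfm.comp (hflm.add_const 1)
    have m3 : Measurable fun x : ℝ => (((x - h * (⌊x / h⌋ : ℝ)) / h : ℝ) : ℂ) := by
      refine Complex.measurable_ofReal.comp ?_
      exact (measurable_id.sub ((measurable_of_countable _ |>.comp hflm).const_mul h)).div_const h
    exact m1.add ((m2.sub m1).mul m3)
  -- derivative on each open cell
  have hderiv : ∀ m : ℤ, ∀ x ∈ Set.Ioo ((m : ℝ) * h) (((m : ℝ) + 1) * h),
      deriv (ph h f) x = (f (m + 1) - f m) / (h : ℂ) := by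
    intro m x hx
    have hev : ph h f =ᶠ[nhds x]
        (fun y => f m + (f (m + 1) - f m) * (((y - h * (m : ℝ)) / h : ℝ) : ℂ)) := by
      filter_upwards [Ioo_mem_nhds hx.1 hx.2] with y hy
      simp only [ph, floor_eq_on_Ioo hh0 m y hy]
    rw [hev.deriv_eq]
    have h1 : HasDerivAt (fun y : ℝ => (y - h * (m : ℝ)) / h) (1 / h) x := by
      simpa using ((hasDerivAt_id x).sub_const (h * (m : ℝ))).div_const h
    have h2 := h1.ofReal_comp
    have h3 := (h2.const_mul (f (m + 1) - f m)).const_add (f m)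
    rw [h3.deriv]
    push_cast
    ring
  -- bound on ph on each open cell
  have hphb : ∀ m : ℤ, ∀ x ∈ Set.Ioo ((m : ℝ) * h) (((m : ℝ) + 1) * h),
      ‖ph h f x‖ ^ 2 ≤ 8 * a m + 2 * a (m + 1) := by
    intro m x hx
    have hfl := floor_eq_on_Ioo hh0 m x hx
    set t : ℝ := (x - h * (m : ℝ)) / h with ht
    have ht0 : 0 ≤ t := by
      apply div_nonneg _ hh0.le
      nlinarith [hx.1]
    have ht1 : t ≤ 1 := by
      rw [div_le_one hh0]
      nlinarith [hx.2]
    have hval : ph h f x = f m + (f (m + 1) - f m) * (t : ℂ) := by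
      simp only [ph, hfl, ht]
    rw [hval]
    have hb1 : ‖f m + (f (m + 1) - f m) * (t : ℂ)‖ ≤ 2 * ‖f m‖ + ‖f (m + 1)‖ := by
      calc ‖f m + (f (m + 1) - f m) * (t : ℂ)‖
          ≤ ‖f m‖ + ‖(f (m + 1) - f m) * (t : ℂ)‖ := norm_add_le _ _
        _ = ‖f m‖ + ‖f (m + 1) - f m‖ * |t| := by
            rw [norm_mul, Complex.norm_real, Real.norm_eq_abs]
        _ ≤ ‖f m‖ + (‖f (m + 1)‖ + ‖f m‖) * 1 := by
            have := norm_sub_le (f (m + 1)) (f m)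
            have habs : |t| ≤ 1 := abs_le.2 ⟨by linarith, ht1⟩
            have := mul_le_mul (norm_sub_le (f (m + 1)) (f m)) habs (abs_nonneg t)
              (by positivity)
            linarith
        _ = 2 * ‖f m‖ + ‖f (m + 1)‖ := by ring
    have hnn : (0:ℝ) ≤ ‖f m + (f (m + 1) - f m) * (t : ℂ)‖ := norm_nonneg _
    have := pow_le_pow_left₀ hnn hb1 2
    simp only [ha]
    nlinarith [sq_nonneg (2 * ‖f m‖ - ‖f (m + 1)‖)]
  -- integral bounds
  have hA : (∫ x : ℝ, ‖ph h f x‖ ^ 2) ≤ h * ∑' m : ℤ, (8 * a m + 2 * a (m + 1)) := by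
    refine piece_bound hh0 _ (hphm.norm.pow_const 2) (fun x => sq_nonneg _) _
      (fun m => by positivity) ((hf.mul_left 8).add (hfs'.mul_left 2)) hphb
  have hB : (∫ x : ℝ, ‖deriv (ph h f) x‖ ^ 2) ≤ h * ∑' m : ℤ, d m := by
    refine piece_bound hh0 _ ((measurable_deriv _).norm.pow_const 2)
      (fun x => sq_nonneg _) _ hd0 hds (fun m x hx => ?_)
    rw [hderiv m x hx]
    simp [hd, Dh]
  -- tsum computation
  have hshift : (∑' m : ℤ, a (m + 1)) = ∑' m : ℤ, a m := by
    exact (Equiv.addRight (1 : ℤ)).tsum_eq a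
  have hsum10 : (∑' m : ℤ, (8 * a m + 2 * a (m + 1))) = 10 * ∑' m : ℤ, a m := by
    rw [Summable.tsum_add (hf.mul_left 8) (hfs'.mul_left 2), tsum_mul_left, tsum_mul_left, hshift]
    ring
  have hS0 : 0 ≤ h * ∑' m : ℤ, a m := mul_nonneg hh0.le (tsum_nonneg ha0)
  have hD0 : 0 ≤ h * ∑' m : ℤ, d m := mul_nonneg hh0.le (tsum_nonneg hd0)
  have hL2f : (L2h h f) ^ 2 = h * ∑' m : ℤ, a m := Real.sq_sqrt hS0
  have hL2d : (L2h h (Dh h f)) ^ 2 = h * ∑' m : ℤ, d m := Real.sq_sqrt hD0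
  rw [hL2f, hL2d]
  set S := h * ∑' m : ℤ, a m with hSdef
  set D := h * ∑' m : ℤ, d m with hDdef
  have hAB : (∫ x : ℝ, ‖ph h f x‖ ^ 2) + (∫ x : ℝ, ‖deriv (ph h f) x‖ ^ 2)
      ≤ 16 * (S + D) := by
    have := hA
    rw [hsum10] at this
    have h10 : h * (10 * ∑' m : ℤ, a m) = 10 * S := by rw [hSdef]; ring
    rw [h10] at this
    linarith [hB]
  calc Real.sqrt ((∫ x : ℝ, ‖ph h f x‖ ^ 2) + ∫ x : ℝ, ‖deriv (ph h f) x‖ ^ 2)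
      ≤ Real.sqrt (16 * (S + D)) := Real.sqrt_le_sqrt hAB
    _ = 4 * Real.sqrt (S + D) := by
        rw [Real.sqrt_mul (by norm_num), show (16:ℝ) = 4 ^ 2 by norm_num,
          Real.sqrt_sq (by norm_num)]
end

section
/- Bihari–LaSalle inequality: let v : [a,b] → [0,∞) be continuous with v(t) ≤ M + ∫_a^t f(s) ω(v(s)) ds for all t ∈ [a,b], where M ≥ 0, f : [a,b] → [0,∞) is continuous, and ω : [0,∞) → [0,∞) is continuous, monotone increasing, with ω(s) > 0 for s > 0. Then v(t) ≤ G^{−1}( G(M) + ∫_a^t f(s)ds ) for all t ∈ [a,b] for which the right-hand side is defined, where G(x) = ∫_{x₀}^x ds/ω(s) for some fixed x₀ > 0. -/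
open MeasureTheory Real

theorem bihari_lasalle (a b : ℝ) (hab : a ≤ b) (v f ω : ℝ → ℝ) (M x₀ : ℝ)
    (hM : 0 ≤ M) (hx₀ : 0 < x₀)
    (hv : ContinuousOn v (Set.Icc a b)) (hvn : ∀ t ∈ Set.Icc a b, 0 ≤ v t)
    (hfc : ContinuousOn f (Set.Icc a b)) (hfn : ∀ t ∈ Set.Icc a b, 0 ≤ f t)
    (hωc : ContinuousOn ω (Set.Ici 0)) (hωm : MonotoneOn ω (Set.Ici 0))
    (hωpos : ∀ s : ℝ, 0 < s → 0 < ω s)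
    (hineq : ∀ t ∈ Set.Icc a b, v t ≤ M + ∫ s in a..t, f s * ω (v s)) :
    ∀ t ∈ Set.Icc a b, ∀ y : ℝ, 0 < y →
      (∫ s in x₀..y, 1 / ω s) = (∫ s in x₀..M, 1 / ω s) + ∫ s in a..t, f s →
      v t ≤ y := by
  intro t ht y hy0 hGeq
  obtain ⟨hat, htb⟩ := ht
  by_contra hcon
  push_neg at hcon
  -- nonnegativity of ω on [0,∞)
  have hωnn : ∀ s : ℝ, 0 ≤ s → 0 ≤ ω s := by
    intro s hs
    rcases eq_or_lt_of_le hs with h | h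
    · have htend : Filter.Tendsto ω (nhdsWithin 0 (Set.Ioi 0)) (nhds (ω 0)) :=
        ((hωc 0 Set.self_mem_Ici).mono Set.Ioi_subset_Ici_self)
      have hev : ∀ᶠ r in nhdsWithin 0 (Set.Ioi 0), 0 ≤ ω r :=
        Filter.eventually_of_mem self_mem_nhdsWithin (fun r hr => (hωpos r hr).le)
      have := ge_of_tendsto htend hev
      rwa [← h]
    · exact (hωpos s h).le
  -- continuous global extensions of f and f * ω ∘ v
  obtain ⟨f', hf'c, hf'eq, hf'n⟩ :
      ∃ f' : ℝ → ℝ, Continuous f' ∧ (∀ s ∈ Set.Icc a b, f' s = f s) ∧ ∀ s, 0 ≤ f' s := by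
    refine ⟨Set.IccExtend hab ((Set.Icc a b).restrict f), hfc.restrict.Icc_extend', ?_, ?_⟩
    · intro s hs; rw [Set.IccExtend_of_mem hab _ hs]; rfl
    · intro s; exact hfn _ (Set.projIcc a b hab s).2
  obtain ⟨g, hgc, hgeq, hgn⟩ :
      ∃ g : ℝ → ℝ, Continuous g ∧ (∀ s ∈ Set.Icc a b, g s = f s * ω (v s)) ∧ ∀ s, 0 ≤ g s := by
    have hc : ContinuousOn (fun s => f s * ω (v s)) (Set.Icc a b) :=
      hfc.mul (hωc.comp hv (fun s hs => hvn s hs))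
    refine ⟨Set.IccExtend hab ((Set.Icc a b).restrict (fun s => f s * ω (v s))),
      hc.restrict.Icc_extend', ?_, ?_⟩
    · intro s hs; rw [Set.IccExtend_of_mem hab _ hs]; rfl
    · intro s
      exact mul_nonneg (hfn _ (Set.projIcc a b hab s).2)
        (hωnn _ (hvn _ (Set.projIcc a b hab s).2))
  set u : ℝ → ℝ := fun s => M + ∫ r in a..s, g r with hu_def
  set F : ℝ → ℝ := fun s => ∫ r in a..s, f' r with hF_def
  set G : ℝ → ℝ := fun x => ∫ s in x₀..x, 1 / ω s with hG_def
  have hGy : G y = G M + ∫ s in a..t, f s := hGeq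
  -- derivatives
  have hu_deriv : ∀ s, HasDerivAt u (g s) s := by
    intro s
    have h1 := intervalIntegral.integral_hasDerivAt_right (hgc.intervalIntegrable a s)
      hgc.stronglyMeasurable.stronglyMeasurableAtFilter hgc.continuousAt
    exact HasDerivAt.const_add M h1
  have hF_deriv : ∀ s, HasDerivAt F (f' s) s := by
    intro s
    exact intervalIntegral.integral_hasDerivAt_right (hf'c.intervalIntegrable a s)
      hf'c.stronglyMeasurable.stronglyMeasurableAtFilter hf'c.continuousAt
  have hu_cont : Continuous u := by
    rw [continuous_iff_continuousAt]; exact fun s => (hu_deriv s).continuousAt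
  have hu_mono : Monotone u := by
    apply monotone_of_deriv_nonneg (fun s => (hu_deriv s).differentiableAt)
    intro s; rw [(hu_deriv s).deriv]; exact hgn s
  have hu_a : u a = M := by simp [hu_def]
  have hF_a : F a = 0 := by simp [hF_def]
  have hvu : ∀ s ∈ Set.Icc a b, v s ≤ u s := by
    intro s hs
    have hcongr : (∫ r in a..s, f r * ω (v r)) = ∫ r in a..s, g r := by
      apply intervalIntegral.integral_congr
      intro r hr
      have hr' : r ∈ Set.Icc a b := by
        have hsub : Set.uIcc a s ⊆ Set.Icc a b := by
          rw [Set.uIcc_of_le hs.1]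
          exact Set.Icc_subset_Icc le_rfl hs.2
        exact hsub hr
      exact (hgeq r hr').symm
    have h2 := hineq s hs
    rw [hcongr] at h2
    exact h2
  have hut : y < u t := lt_of_lt_of_le hcon (hvu t ⟨hat, htb⟩)
  -- F t agrees with the integral of f
  have hFt : F t = ∫ s in a..t, f s := by
    apply intervalIntegral.integral_congr
    intro r hr
    have hr' : r ∈ Set.Icc a b := by
      have hsub : Set.uIcc a t ⊆ Set.Icc a b := by
        rw [Set.uIcc_of_le hat]; exact Set.Icc_subset_Icc le_rfl htb
      exact hsub hr
    exact hf'eq r hr'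
  -- 1/ω facts
  have hinvc : ContinuousOn (fun s => 1 / ω s) (Set.Ioi 0) :=
    ContinuousOn.div continuousOn_const (hωc.mono Set.Ioi_subset_Ici_self)
      (fun s hs => (hωpos s hs).ne')
  have hinvnn : ∀ s : ℝ, 0 < s → 0 ≤ 1 / ω s :=
    fun s hs => div_nonneg zero_le_one (hωpos s hs).le
  have huIcc : ∀ x z : ℝ, 0 < x → 0 < z → Set.uIcc x z ⊆ Set.Ioi 0 := by
    intro x z hx hz
    rw [Set.uIcc]
    intro s hs
    exact lt_of_lt_of_le (lt_min hx hz) hs.1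
  have hint : ∀ x z : ℝ, 0 < x → 0 < z → IntervalIntegrable (fun s => 1 / ω s) volume x z :=
    fun x z hx hz => (hinvc.mono (huIcc x z hx hz)).intervalIntegrable
  have hGd : ∀ x : ℝ, 0 < x → HasDerivAt G (1 / ω x) x := by
    intro x hx
    have hmeas : StronglyMeasurableAtFilter (fun s => 1 / ω s) (nhds x) :=
      ⟨Set.Ioi 0, isOpen_Ioi.mem_nhds hx, hinvc.aestronglyMeasurable measurableSet_Ioi⟩
    exact intervalIntegral.integral_hasDerivAt_right (hint x₀ x hx₀ hx) hmeas
      (hinvc.continuousAt (isOpen_Ioi.mem_nhds hx))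
  have hGlt : ∀ x z : ℝ, 0 < x → x < z → G x < G z := by
    intro x z hx hxz
    have hz : 0 < z := hx.trans hxz
    have hadd := intervalIntegral.integral_add_adjacent_intervals
      (hint x₀ x hx₀ hx) (hint x z hx hz)
    have hpos : 0 < ∫ s in x..z, 1 / ω s := by
      apply intervalIntegral.intervalIntegral_pos_of_pos_on (hint x z hx hz)
      · intro s hs
        exact div_pos one_pos (hωpos s (hx.trans hs.1))
      · exact hxz
    have e1 : G x = ∫ s in x₀..x, 1 / ω s := rfl
    have e2 : G z = ∫ s in x₀..z, 1 / ω s := rfl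
    rw [e1, e2]
    linarith [hadd, hpos]
  -- key comparison lemma on [c, t] where u ≥ z > 0
  have keyA : ∀ c ∈ Set.Icc a t, ∀ z : ℝ, 0 < z → (∀ s ∈ Set.Icc c t, z ≤ u s) →
      G (u t) ≤ G (u c) + (F t - F c) := by
    intro c hc z hz hzu
    have hct : c ≤ t := hc.2
    have hsub : Set.Icc c t ⊆ Set.Icc a b := Set.Icc_subset_Icc hc.1 htb
    set φ : ℝ → ℝ := fun s => F s - G (u s) with hφ
    have hd : ∀ s ∈ Set.Icc c t, HasDerivAt φ (f' s - 1 / ω (u s) * g s) s := by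
      intro s hs
      have hus : 0 < u s := lt_of_lt_of_le hz (hzu s hs)
      have h1 : HasDerivAt (fun r => G (u r)) (1 / ω (u s) * g s) s :=
        (hGd (u s) hus).comp s (hu_deriv s)
      exact (hF_deriv s).sub h1
    have hmono : MonotoneOn φ (Set.Icc c t) := by
      apply monotoneOn_of_deriv_nonneg (convex_Icc c t)
      · exact fun s hs => ((hd s hs).continuousAt).continuousWithinAt
      · intro s hs
        exact ((hd s (interior_subset hs)).differentiableAt).differentiableWithinAt
      · intro s hs
        have hs' : s ∈ Set.Icc c t := interior_subset hs
        rw [(hd s hs').deriv]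
        have hsab : s ∈ Set.Icc a b := hsub hs'
        have hus : 0 < u s := lt_of_lt_of_le hz (hzu s hs')
        have hωu : 0 < ω (u s) := hωpos _ hus
        have hωv : ω (v s) ≤ ω (u s) := hωm (hvn s hsab) hus.le (hvu s hsab)
        have hfs : 0 ≤ f s := hfn s hsab
        have hkey : 1 / ω (u s) * g s ≤ f' s := by
          rw [hgeq s hsab, hf'eq s hsab]
          rw [one_div, ← div_eq_inv_mul, div_le_iff₀ hωu]
          exact mul_le_mul_of_nonneg_left hωv hfs
        linarith
    have h3 := hmono (Set.left_mem_Icc.2 hct) (Set.right_mem_Icc.2 hct) hct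
    simp only [hφ] at h3
    linarith
  -- case split on M
  rcases eq_or_lt_of_le hM with hM0 | hMpos
  · -- M = 0
    have hM0' : M = 0 := hM0.symm
    set δ : ℝ := G (u t) - G y with hδ_def
    have hδ : 0 < δ := sub_pos.2 (hGlt y (u t) hy0 hut)
    set m : ℝ := min y x₀ with hm
    have hm0 : 0 < m := lt_min hy0 hx₀
    obtain ⟨z, hz0, hzy, hzsmall⟩ : ∃ z : ℝ, 0 < z ∧ z < y ∧ G z - G 0 < δ := by
      by_cases hInt : IntervalIntegrable (fun s => 1 / ω s) volume 0 x₀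
      · have hIcc : IntegrableOn (fun s => 1 / ω s) (Set.uIcc 0 x₀) volume := by
          rw [Set.uIcc_of_le hx₀.le, integrableOn_Icc_iff_integrableOn_Ioc]
          simpa [intervalIntegrable_iff, Set.uIoc_of_le hx₀.le] using hInt
        have hcontH := intervalIntegral.continuousOn_primitive_interval hIcc
        have htend : Filter.Tendsto (fun w => ∫ s in (0:ℝ)..w, 1 / ω s)
            (nhdsWithin 0 (Set.uIcc 0 x₀)) (nhds 0) := by
          have h1 := hcontH 0 Set.left_mem_uIcc
          simpa [ContinuousWithinAt] using h1
        have hle : nhdsWithin (0:ℝ) (Set.Ioi 0) ≤ nhdsWithin 0 (Set.uIcc 0 x₀) := by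
          apply nhdsWithin_le_of_mem
          apply Filter.mem_of_superset (Ioo_mem_nhdsGT hx₀)
          rw [Set.uIcc_of_le hx₀.le]
          exact fun s hs => ⟨hs.1.le, hs.2.le⟩
        have htend2 := htend.mono_left hle
        have hev1 : ∀ᶠ w in nhdsWithin (0:ℝ) (Set.Ioi 0),
            (∫ s in (0:ℝ)..w, 1 / ω s) < δ := htend2.eventually_lt_const hδ
        have hev2 : ∀ᶠ w in nhdsWithin (0:ℝ) (Set.Ioi 0), w ∈ Set.Ioo (0:ℝ) m :=
          Filter.eventually_of_mem (Ioo_mem_nhdsGT hm0) (fun w hw => hw)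
        obtain ⟨z, hzlt, hzm⟩ := (hev1.and hev2).exists
        refine ⟨z, hzm.1, lt_of_lt_of_le hzm.2 (min_le_left _ _), ?_⟩
        have hi1 : IntervalIntegrable (fun s => 1 / ω s) volume x₀ 0 := hInt.symm
        have hi2 : IntervalIntegrable (fun s => 1 / ω s) volume 0 z := by
          apply hInt.mono_set
          rw [Set.uIcc_of_le hzm.1.le, Set.uIcc_of_le hx₀.le]
          exact Set.Icc_subset_Icc le_rfl (hzm.2.le.trans (min_le_right _ _))
        have hadd := intervalIntegral.integral_add_adjacent_intervals hi1 hi2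
        have e1 : G z = ∫ s in x₀..z, 1 / ω s := rfl
        have e2 : G 0 = ∫ s in x₀..(0:ℝ), 1 / ω s := rfl
        rw [e1, e2]
        linarith [hadd, hzlt]
      · have hG0 : G 0 = 0 := by
          have h1 : (∫ s in (0:ℝ)..x₀, 1 / ω s) = 0 := intervalIntegral.integral_undef hInt
          have e2 : G 0 = ∫ s in x₀..(0:ℝ), 1 / ω s := rfl
          rw [e2, intervalIntegral.integral_symm, h1, neg_zero]
        refine ⟨m / 2, by positivity,
          lt_of_lt_of_le (half_lt_self hm0) (min_le_left _ _), ?_⟩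
        have hG2 : G (m / 2) ≤ 0 := by
          have hle2 : m / 2 ≤ x₀ := (half_le_self hm0.le).trans (min_le_right _ _)
          have hnn : 0 ≤ ∫ s in (m / 2)..x₀, 1 / ω s := by
            apply intervalIntegral.integral_nonneg hle2
            intro s hs
            exact hinvnn s (lt_of_lt_of_le (by positivity) hs.1)
          have e1 : G (m / 2) = ∫ s in x₀..(m / 2), 1 / ω s := rfl
          rw [e1, intervalIntegral.integral_symm]
          linarith
        linarith [hG0, hG2, hδ]
    -- construct the last time c where u ≤ z
    set S : Set ℝ := {s | s ∈ Set.Icc a t ∧ u s ≤ z} with hS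
    have hSne : a ∈ S := ⟨Set.left_mem_Icc.2 hat, by rw [hu_a, hM0']; exact hz0.le⟩
    have hSbdd : BddAbove S := ⟨t, fun s hs => hs.1.2⟩
    have hSclosed : IsClosed S := by
      have hSeq : S = Set.Icc a t ∩ u ⁻¹' Set.Iic z := by
        ext s; simp [hS, Set.mem_Icc, and_assoc]
      rw [hSeq]
      exact isClosed_Icc.inter (isClosed_Iic.preimage hu_cont)
    have hcS : sSup S ∈ S := hSclosed.csSup_mem ⟨a, hSne⟩ hSbdd
    set c : ℝ := sSup S with hc_def
    have hcat : c ∈ Set.Icc a t := hcS.1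
    have hucz : u c ≤ z := hcS.2
    have hct : c < t := by
      rcases eq_or_lt_of_le hcat.2 with h | h
      · exfalso; rw [h] at hucz; linarith
      · exact h
    have hIocz : ∀ s ∈ Set.Ioc c t, z ≤ u s := by
      intro s hs
      by_contra hcon2
      push_neg at hcon2
      have hmem : s ∈ S := ⟨⟨hcat.1.trans hs.1.le, hs.2⟩, hcon2.le⟩
      have hle3 : s ≤ c := le_csSup hSbdd hmem
      linarith [hs.1]
    have hzuc : z ≤ u c := by
      have htendu : Filter.Tendsto u (nhdsWithin c (Set.Ioi c)) (nhds (u c)) :=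
        (hu_cont.continuousAt).continuousWithinAt
      apply ge_of_tendsto htendu
      exact Filter.eventually_of_mem (Ioc_mem_nhdsGT hct) hIocz
    have hall : ∀ s ∈ Set.Icc c t, z ≤ u s := by
      intro s hs
      rcases eq_or_lt_of_le hs.1 with h | h
      · rw [← h]; exact hzuc
      · exact hIocz s ⟨h, hs.2⟩
    have hkey := keyA c hcat z hz0 hall
    have hucz' : u c = z := le_antisymm hucz hzuc
    rw [hucz'] at hkey
    have hFc : 0 ≤ F c := intervalIntegral.integral_nonneg hcat.1 (fun s _ => hf'n s)
    -- G y = G 0 + F t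
    rw [hM0'] at hGy
    rw [← hFt] at hGy
    -- hkey : G (u t) ≤ G z + (F t - F c), hGy : G y = G 0 + F t
    -- hzsmall : G z - G 0 < δ = G (u t) - G y
    linarith [hkey, hGy, hzsmall, hFc]
  · -- 0 < M
    have h1 : ∀ s ∈ Set.Icc a t, M ≤ u s := by
      intro s hs
      calc M = u a := hu_a.symm
      _ ≤ u s := hu_mono hs.1
    have h2 := keyA a ⟨le_rfl, hat⟩ M hMpos h1
    rw [hu_a, hF_a, hFt] at h2
    have hlt := hGlt y (u t) hy0 hut
    linarith [hGy, hlt, h2]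
end

section
/- L²-bound for the averaged power nonlinearity: for p > 1 and h ∈ (0,1], ‖⟨Q_h⟩(f)‖_{L²_h} ≤ h^{−(p−1)/2} ‖f‖_{L²_h}^p for every f ∈ L²_h(hℤ), where ⟨Q_h⟩(f) = ∫_0^1 T_{h,r}^{−1}( |T_{h,r}f|^{p−1} T_{h,r}f ) dr. -/
open MeasureTheory Real

/-- Cauchy–Schwarz on `[0,1]`: the square of the integral is at most the integral
of the square. -/
private lemma cs_sq_integral (u : ℝ → ℝ) (hu : IntervalIntegrable u volume 0 1)
    (hu2 : IntervalIntegrable (fun r => u r ^ 2) volume 0 1) :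
    (∫ r in (0:ℝ)..1, u r) ^ 2 ≤ ∫ r in (0:ℝ)..1, u r ^ 2 := by
  set c := ∫ r in (0:ℝ)..1, u r with hc
  have h0 : (0:ℝ) ≤ ∫ r in (0:ℝ)..1, (u r - c) ^ 2 :=
    intervalIntegral.integral_nonneg (by norm_num) fun r _ => sq_nonneg _
  have he : (fun r => (u r - c) ^ 2) = fun r => (u r ^ 2 - (2 * c) * u r) + c ^ 2 := by
    funext r; ring
  rw [he, intervalIntegral.integral_add (hu2.sub (hu.const_mul _)) intervalIntegrable_const,
    intervalIntegral.integral_sub hu2 (hu.const_mul _),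
    intervalIntegral.integral_const_mul, intervalIntegral.integral_const] at h0
  rw [← hc] at h0
  simp only [sub_zero, one_smul, smul_eq_mul] at h0
  nlinarith [h0]

set_option maxHeartbeats 1000000 in
/-- Main estimate: if each slice `G r` has `ℓ²`-sum bounded by `C`, then the
pointwise-in-`m` integral over `[0,1]` has `ℓ²`-sum bounded by `C`. -/
private lemma aux_minkowski (G : ℝ → ℤ → ℂ) (C : ℝ) (hC : 0 ≤ C)
    (hGsum : ∀ r, Summable fun m : ℤ => ‖G r m‖ ^ 2)
    (hGtsum : ∀ r, ∑' m : ℤ, ‖G r m‖ ^ 2 ≤ C)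
    (hint : ∀ m : ℤ, IntervalIntegrable (fun r => G r m) volume 0 1) :
    ∑' m : ℤ, ‖∫ r in (0:ℝ)..1, G r m‖ ^ 2 ≤ C := by
  have hGpt : ∀ r m, ‖G r m‖ ^ 2 ≤ C := fun r m =>
    (Summable.le_tsum (hGsum r) m fun j _ => sq_nonneg _).trans (hGtsum r)
  have hGle : ∀ r m, ‖G r m‖ ≤ Real.sqrt C := by
    intro r m
    calc ‖G r m‖ = Real.sqrt (‖G r m‖ ^ 2) := (Real.sqrt_sq (norm_nonneg _)).symm
      _ ≤ Real.sqrt C := Real.sqrt_le_sqrt (hGpt r m)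
  -- integrability of the squared norm
  have hint2 : ∀ m : ℤ, IntervalIntegrable (fun r => ‖G r m‖ ^ 2) volume 0 1 := by
    intro m
    have h1 : IntervalIntegrable (fun r => Real.sqrt C * ‖G r m‖) volume 0 1 :=
      (hint m).norm.const_mul _
    refine h1.mono_fun ?_ ?_
    · exact (continuous_pow 2).comp_aestronglyMeasurable
        ((hint m).aestronglyMeasurable.norm.mono_set
          (by rw [Set.uIoc_of_le (zero_le_one : (0:ℝ) ≤ 1)]))
    · refine Filter.Eventually.of_forall fun r => ?_
      have hg : (0:ℝ) ≤ ‖G r m‖ := norm_nonneg _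
      have hC' : (0:ℝ) ≤ Real.sqrt C := Real.sqrt_nonneg _
      simp only [Real.norm_eq_abs, pow_two, abs_of_nonneg (mul_nonneg hg hg),
        abs_of_nonneg (mul_nonneg hC' hg)]
      exact mul_le_mul_of_nonneg_right (hGle r m) hg
  -- per-m bound via Cauchy–Schwarz
  have hFm : ∀ m : ℤ, ‖∫ r in (0:ℝ)..1, G r m‖ ^ 2 ≤ ∫ r in (0:ℝ)..1, ‖G r m‖ ^ 2 := by
    intro m
    have h1 : ‖∫ r in (0:ℝ)..1, G r m‖ ≤ ∫ r in (0:ℝ)..1, ‖G r m‖ :=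
      intervalIntegral.norm_integral_le_integral_norm zero_le_one
    have h2 := cs_sq_integral (fun r => ‖G r m‖) (hint m).norm (hint2 m)
    exact (pow_le_pow_left₀ (norm_nonneg _) h1 2).trans h2
  -- finite-sum bound
  have hfin : ∀ s : Finset ℤ, ∑ m ∈ s, ‖∫ r in (0:ℝ)..1, G r m‖ ^ 2 ≤ C := by
    intro s
    calc ∑ m ∈ s, ‖∫ r in (0:ℝ)..1, G r m‖ ^ 2
        ≤ ∑ m ∈ s, ∫ r in (0:ℝ)..1, ‖G r m‖ ^ 2 := Finset.sum_le_sum fun m _ => hFm m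
      _ = ∫ r in (0:ℝ)..1, ∑ m ∈ s, ‖G r m‖ ^ 2 :=
          (intervalIntegral.integral_finset_sum fun m _ => hint2 m).symm
      _ ≤ ∫ r in (0:ℝ)..1, C := by
          have hs : IntervalIntegrable (fun r => ∑ m ∈ s, ‖G r m‖ ^ 2) volume 0 1 := by
            simpa [← Finset.sum_fn] using IntervalIntegrable.sum s fun m _ => hint2 m
          refine intervalIntegral.integral_mono_on zero_le_one hs intervalIntegrable_const
            fun r _ => ?_
          exact (Summable.sum_le_tsum s (fun m _ => sq_nonneg _) (hGsum r)).trans (hGtsum r)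
      _ = C := by simp
  exact tsum_le_of_sum_le' hC hfin

set_option maxHeartbeats 1000000 in
theorem averaged_nonlinearity_L2_bound (p h : ℝ) (hp : 1 < p) (hh : h ∈ Set.Ioc (0 : ℝ) 1)
    (T Tinv : ℝ → (ℤ → ℂ) → (ℤ → ℂ))
    (hT : ∀ (r : ℝ) (g : ℤ → ℂ), Summable (fun m : ℤ => ‖g m‖ ^ 2) →
      Summable (fun m : ℤ => ‖T r g m‖ ^ 2) ∧ L2h h (T r g) = L2h h g)
    (hTinv : ∀ (r : ℝ) (g : ℤ → ℂ), Summable (fun m : ℤ => ‖g m‖ ^ 2) →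
      Summable (fun m : ℤ => ‖Tinv r g m‖ ^ 2) ∧ L2h h (Tinv r g) = L2h h g)
    (f : ℤ → ℂ) (hf : Summable fun m : ℤ => ‖f m‖ ^ 2)
    (hint : ∀ m : ℤ, IntervalIntegrable
      (fun r => Tinv r (fun x => ((‖T r f x‖ ^ (p - 1) : ℝ) : ℂ) * T r f x) m) volume 0 1) :
    L2h h (fun m => ∫ r in (0 : ℝ)..1,
        Tinv r (fun x => ((‖T r f x‖ ^ (p - 1) : ℝ) : ℂ) * T r f x) m) ≤
      h ^ (-((p - 1) / 2)) * (L2h h f) ^ p := by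
  obtain ⟨hh0, hh1⟩ := hh
  have hp0 : (0:ℝ) < p := lt_trans one_pos hp
  have hp1 : (0:ℝ) ≤ p - 1 := by linarith
  set Sf : ℝ := ∑' m : ℤ, ‖f m‖ ^ 2 with hSfdef
  have hSf0 : 0 ≤ Sf := tsum_nonneg fun m => sq_nonneg _
  have hsplit : ∀ t : ℝ, 0 ≤ t → t ^ p = t ^ (p - 1) * t := by
    intro t ht
    rw [Real.rpow_of_add_eq ht (ne_of_gt hp0) (by ring : (p - 1) + 1 = p), Real.rpow_one]
  -- equality of ℓ² sums from equal L2h norms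
  have l2h_eq : ∀ g₁ g₂ : ℤ → ℂ, L2h h g₁ = L2h h g₂ →
      ∑' m : ℤ, ‖g₁ m‖ ^ 2 = ∑' m : ℤ, ‖g₂ m‖ ^ 2 := by
    intro g₁ g₂ he
    have h1 : 0 ≤ h * ∑' m : ℤ, ‖g₁ m‖ ^ 2 :=
      mul_nonneg hh0.le (tsum_nonneg fun m => sq_nonneg _)
    have h2 : 0 ≤ h * ∑' m : ℤ, ‖g₂ m‖ ^ 2 :=
      mul_nonneg hh0.le (tsum_nonneg fun m => sq_nonneg _)
    have he' : Real.sqrt (h * ∑' m : ℤ, ‖g₁ m‖ ^ 2)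
        = Real.sqrt (h * ∑' m : ℤ, ‖g₂ m‖ ^ 2) := he
    exact mul_left_cancel₀ (ne_of_gt hh0) ((Real.sqrt_inj h1 h2).mp he')
  have hTf : ∀ r, Summable fun m : ℤ => ‖T r f m‖ ^ 2 := fun r => (hT r f hf).1
  have hSr : ∀ r, ∑' m : ℤ, ‖T r f m‖ ^ 2 = Sf := fun r => l2h_eq _ _ (hT r f hf).2
  have hx2 : ∀ r m, ‖T r f m‖ ^ 2 ≤ Sf := by
    intro r m
    rw [← hSr r]
    exact Summable.le_tsum (hTf r) m fun j _ => sq_nonneg _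
  -- the nonlinearity
  set N : ℝ → ℤ → ℂ := fun r x => ((‖T r f x‖ ^ (p - 1) : ℝ) : ℂ) * T r f x with hNdef
  have hNval : ∀ r m, ‖N r m‖ ^ 2 = (‖T r f m‖ ^ 2) ^ p := by
    intro r m
    have hx : (0:ℝ) ≤ ‖T r f m‖ := norm_nonneg _
    have h1 : ‖N r m‖ = ‖T r f m‖ ^ p := by
      simp only [hNdef, norm_mul, Complex.norm_real, Real.norm_eq_abs,
        abs_of_nonneg (Real.rpow_nonneg hx (p - 1))]
      rw [Real.rpow_of_add_eq hx (ne_of_gt hp0) (by ring : (p - 1) + 1 = p), Real.rpow_one]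
    rw [h1, ← Real.rpow_natCast (‖T r f m‖ ^ p) 2, ← Real.rpow_natCast ‖T r f m‖ 2,
      ← Real.rpow_mul hx, ← Real.rpow_mul hx, mul_comm]
  have hNle : ∀ r m, ‖N r m‖ ^ 2 ≤ Sf ^ (p - 1) * ‖T r f m‖ ^ 2 := by
    intro r m
    rw [hNval r m, hsplit _ (sq_nonneg (‖T r f m‖))]
    exact mul_le_mul_of_nonneg_right
      (Real.rpow_le_rpow (sq_nonneg _) (hx2 r m) hp1) (sq_nonneg _)
  have hNsum : ∀ r, Summable fun m : ℤ => ‖N r m‖ ^ 2 := fun r =>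
    Summable.of_nonneg_of_le (fun m => sq_nonneg _) (hNle r) ((hTf r).mul_left _)
  have hNtsum : ∀ r, ∑' m : ℤ, ‖N r m‖ ^ 2 ≤ Sf ^ p := by
    intro r
    calc ∑' m : ℤ, ‖N r m‖ ^ 2 ≤ ∑' m : ℤ, Sf ^ (p - 1) * ‖T r f m‖ ^ 2 :=
          Summable.tsum_le_tsum (hNle r) (hNsum r) ((hTf r).mul_left _)
      _ = Sf ^ (p - 1) * Sf := by rw [tsum_mul_left, hSr r]
      _ = Sf ^ p := (hsplit Sf hSf0).symm
  -- the evolved nonlinearity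
  have hGsum : ∀ r, Summable fun m : ℤ => ‖Tinv r (N r) m‖ ^ 2 := fun r =>
    (hTinv r (N r) (hNsum r)).1
  have hGtsum : ∀ r, ∑' m : ℤ, ‖Tinv r (N r) m‖ ^ 2 ≤ Sf ^ p := fun r =>
    (l2h_eq _ _ (hTinv r (N r) (hNsum r)).2).le.trans (hNtsum r)
  have key : ∑' m : ℤ, ‖∫ r in (0:ℝ)..1, Tinv r (N r) m‖ ^ 2 ≤ Sf ^ p :=
    aux_minkowski (fun r => Tinv r (N r)) (Sf ^ p) (Real.rpow_nonneg hSf0 p)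
      hGsum hGtsum (fun m => hint m)
  -- final algebra
  have hmain : L2h h (fun m => ∫ r in (0 : ℝ)..1, Tinv r (N r) m)
      ≤ Real.sqrt (h * Sf ^ p) := by
    refine Real.sqrt_le_sqrt ?_
    exact mul_le_mul_of_nonneg_left key hh0.le
  have halg : Real.sqrt (h * Sf ^ p) = h ^ (-((p - 1) / 2)) * (L2h h f) ^ p := by
    have hhSf : (0:ℝ) ≤ h * Sf := mul_nonneg hh0.le hSf0
    have hL : L2h h f = (h * Sf) ^ ((1:ℝ)/2) := by
      rw [hSfdef]; unfold L2h; rw [Real.sqrt_eq_rpow]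
    have e1 : Real.sqrt (h * Sf ^ p) = h ^ ((1:ℝ)/2) * Sf ^ (p * (1/2)) := by
      rw [Real.sqrt_eq_rpow, Real.mul_rpow hh0.le (Real.rpow_nonneg hSf0 p),
        ← Real.rpow_mul hSf0]
    have e2 : h ^ (-((p - 1) / 2)) * (L2h h f) ^ p = h ^ ((1:ℝ)/2) * Sf ^ (p * (1/2)) := by
      rw [hL, ← Real.rpow_mul hhSf, Real.mul_rpow hh0.le hSf0, ← mul_assoc,
        ← Real.rpow_add hh0]
      rw [show -((p - 1) / 2) + 1 / 2 * p = (1:ℝ)/2 by ring,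
        show (1:ℝ) / 2 * p = p * (1/2) by ring]
    rw [e1, e2]
  exact hmain.trans_eq halg
end
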